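/- arXiv:2308.03748 — 12 statements merged into one kernel-verified Lean document; each statement's English description precedes it below -/
import Mathlib

section
/- Let 0 < ε < 1 be a real number and let n, t be positive integers with t < (1+ε)^n. If A = {a_1, a_2, …, a_n} is an n-element set of positive integers that is sumset-distinct modulo N = 2^n + t, then max A ≥ (1-ε)·N/3. -/
/-!
With `ω = exp (2πi/N)`, expanding `∏ a ∈ A, (1 + ω ^ a)` gives `∑ ω ^ r` over the `2 ^ n` distinct
residues `r` of the subset sums. All `N`-th roots of unity sum to zero, so this is minus the sum
over the `t` missing residues, and the product has norm at most `t < (1 + ε) ^ n`. But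
`‖1 + ω ^ a‖ = 2 cos (π a / N)`, which is at least `2 cos (π (1 - ε) / 3) ≥ 1 + ε` when
`a ≤ (1 - ε) N / 3`; so not every element of `A` can be that small.
-/

/-- An `n`-element set `A` of positive integers is *sumset-distinct modulo `N`*
if all subset sums (including the empty sum) are pairwise distinct modulo `N`. -/
def SumsetDistinctMod (N : ℕ) (A : Finset ℕ) : Prop :=
  ∀ B ⊆ A, ∀ C ⊆ A, (∑ x ∈ B, x) % N = (∑ x ∈ C, x) % N → B = C

open Finset Real

def subsetSumResidues (N : ℕ) (A : Finset ℕ) : Finset ℕ :=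
  A.powerset.image fun B => (∑ x ∈ B, x) % N

theorem subsetSumResidues_subset_range {N : ℕ} (hN : 0 < N) (A : Finset ℕ) :
    subsetSumResidues N A ⊆ range N := by
  intro r hr
  obtain ⟨B, -, rfl⟩ := mem_image.mp hr
  exact mem_range.mpr (Nat.mod_lt _ hN)

namespace SumsetDistinctMod

variable {N : ℕ} {A : Finset ℕ}

theorem injOn_sum_mod (hA : SumsetDistinctMod N A) :
    Set.InjOn (fun B => (∑ x ∈ B, x) % N) A.powerset := fun B hB C hC =>
  hA B (mem_powerset.mp hB) C (mem_powerset.mp hC)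

theorem card_subsetSumResidues (hA : SumsetDistinctMod N A) :
    #(subsetSumResidues N A) = 2 ^ #A := by
  rw [subsetSumResidues, card_image_of_injOn hA.injOn_sum_mod, card_powerset]

theorem two_pow_card_le (hA : SumsetDistinctMod N A) (hN : 0 < N) : 2 ^ #A ≤ N := by
  simpa [hA.card_subsetSumResidues] using card_le_card (subsetSumResidues_subset_range hN A)

theorem prod_one_add_pow {R : Type*} [CommSemiring R] (hA : SumsetDistinctMod N A) {ω : R}
    (hωN : ω ^ N = 1) : ∏ a ∈ A, (1 + ω ^ a) = ∑ r ∈ subsetSumResidues N A, ω ^ r := by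
  rw [prod_one_add, subsetSumResidues, sum_image hA.injOn_sum_mod]
  exact sum_congr rfl fun B _ => by rw [prod_pow_eq_pow_sum, pow_eq_pow_mod _ hωN]

end SumsetDistinctMod

section RootOfUnity

variable {K : Type*} [NormedField K] {ω : K} {N : ℕ}

theorem norm_sum_pow_le_card_sdiff (hωN : ω ^ N = 1) (hω1 : ω ≠ 1) (hN : 0 < N)
    {R : Finset ℕ} (hR : R ⊆ range N) : ‖∑ r ∈ R, ω ^ r‖ ≤ #(range N \ R) := by
  have hnorm : ‖ω‖ = 1 :=
    (pow_eq_one_iff_of_nonneg (norm_nonneg ω) hN.ne').mp (by rw [← norm_pow, hωN, norm_one])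
  have hcompl : ∑ r ∈ R, ω ^ r = -∑ r ∈ range N \ R, ω ^ r := by
    have hzero : ∑ r ∈ range N, ω ^ r = 0 := by rw [geom_sum_eq hω1, hωN, sub_self, zero_div]
    rw [← sum_sdiff hR, add_eq_zero_iff_neg_eq] at hzero
    exact hzero.symm
  calc ‖∑ r ∈ R, ω ^ r‖ ≤ ∑ r ∈ range N \ R, ‖ω ^ r‖ := by
        rw [hcompl, norm_neg]; exact norm_sum_le _ _
    _ = #(range N \ R) := by simp [hnorm]

theorem SumsetDistinctMod.norm_prod_one_add_pow_le {A : Finset ℕ} (hA : SumsetDistinctMod N A)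
    (hωN : ω ^ N = 1) (hω1 : ω ≠ 1) (hN : 0 < N) :
    ‖∏ a ∈ A, (1 + ω ^ a)‖ ≤ N - 2 ^ #A := by
  have hR := subsetSumResidues_subset_range hN A
  have hbound := norm_sum_pow_le_card_sdiff hωN hω1 hN hR
  rw [card_sdiff_of_subset hR, card_range, hA.card_subsetSumResidues,
    Nat.cast_sub (hA.two_pow_card_le hN)] at hbound
  rw [hA.prod_one_add_pow hωN]
  exact_mod_cast hbound

end RootOfUnity

theorem Complex.norm_one_add_exp_mul_I (θ : ℝ) :
    ‖1 + Complex.exp (θ * Complex.I)‖ = 2 * |Real.cos (θ / 2)| := by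
  -- `exp ((θ + π) i) = -exp (θ i)` turns the chord-length formula into this one.
  have h := Complex.norm_exp_I_mul_ofReal_sub_one (θ + π)
  rw [Complex.ofReal_add, mul_add, Complex.exp_add, mul_comm Complex.I π, Complex.exp_pi_mul_I,
    add_div, Real.sin_add_pi_div_two, norm_mul, Real.norm_two, Real.norm_eq_abs] at h
  rw [← h, mul_comm, ← norm_neg]
  ring_nf

/-- Concavity of `cos` on `[0, π/3]`, between `cos 0 = 1` and `cos (π/3) = 1/2`. -/
theorem one_add_le_two_mul_cos {ε : ℝ} (hε0 : 0 ≤ ε) (hε1 : ε ≤ 1) :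
    1 + ε ≤ 2 * cos (π * (1 - ε) / 3) := by
  have h := strictConcaveOn_cos_Icc.concaveOn.2 (x := 0) (y := π / 3)
    ⟨by linarith [pi_pos], by positivity⟩ ⟨by linarith [pi_pos], by linarith [pi_pos]⟩
    hε0 (sub_nonneg.mpr hε1) (by ring)
  simp only [smul_eq_mul, mul_zero, zero_add, cos_zero, cos_pi_div_three] at h
  rw [show (1 - ε) * (π / 3) = π * (1 - ε) / 3 by ring] at h
  linarith

theorem one_add_le_norm_one_add_exp_pow {ε : ℝ} (hε0 : 0 ≤ ε) (hε1 : ε ≤ 1) {N a : ℕ}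
    (hN : 0 < N) (ha : (a : ℝ) ≤ (1 - ε) * N / 3) :
    1 + ε ≤ ‖1 + Complex.exp (2 * π * Complex.I / N) ^ a‖ := by
  have hpow : Complex.exp (2 * π * Complex.I / N) ^ a
      = Complex.exp ((2 * π * a / N : ℝ) * Complex.I) := by
    rw [← Complex.exp_nat_mul]; push_cast; ring_nf
  have hN' : (0 : ℝ) < N := by exact_mod_cast hN
  have hangle : π * a / N ≤ π * (1 - ε) / 3 := by
    rw [div_le_iff₀ hN']; nlinarith [pi_pos]
  rw [hpow, Complex.norm_one_add_exp_mul_I, show 2 * π * a / N / 2 = π * a / N by ring]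
  calc 1 + ε ≤ 2 * cos (π * (1 - ε) / 3) := one_add_le_two_mul_cos hε0 hε1
    _ ≤ 2 * cos (π * a / N) := by
        gcongr
        exact cos_le_cos_of_nonneg_of_le_pi (by positivity) (by nlinarith [pi_pos]) hangle
    _ ≤ 2 * |cos (π * a / N)| := by gcongr; exact le_abs_self _

theorem stmt0_general (ε : ℝ) (hε0 : 0 < ε) (hε1 : ε < 1) (n t : ℕ)
    (htlt : (t : ℝ) < (1 + ε) ^ n) (N : ℕ) (hN : N = 2 ^ n + t)
    (A : Finset ℕ) (hAcard : A.card = n)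
    (hA : SumsetDistinctMod N A) (hAne : A.Nonempty) :
    (1 - ε) * N / 3 ≤ (A.max' hAne : ℝ) := by
  by_contra! hmax
  have hN2 : 2 ≤ N := by
    have := Nat.one_lt_two_pow (hAcard ▸ hAne.card_pos.ne')
    omega
  set ω := Complex.exp (2 * π * Complex.I / N)
  have hω : IsPrimitiveRoot ω N := Complex.isPrimitiveRoot_exp N (by omega)
  have hupper : ‖∏ a ∈ A, (1 + ω ^ a)‖ ≤ t := by
    have h := hA.norm_prod_one_add_pow_le hω.pow_eq_one (hω.ne_one hN2) (by omega)
    rwa [hN, hAcard, Nat.cast_add, Nat.cast_pow, Nat.cast_two, add_sub_cancel_left] at h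
  have hlower : (1 + ε) ^ n ≤ ‖∏ a ∈ A, (1 + ω ^ a)‖ := by
    rw [norm_prod, ← hAcard, ← prod_const]
    refine prod_le_prod (fun _ _ => by linarith) fun a ha => ?_
    refine one_add_le_norm_one_add_exp_pow hε0.le hε1.le (by omega) ?_
    exact (Nat.cast_le.mpr (A.le_max' a ha)).trans hmax.le
  linarith

theorem stmt0 (ε : ℝ) (hε0 : 0 < ε) (hε1 : ε < 1) (n t : ℕ) (hn : 0 < n) (ht : 0 < t)
    (htlt : (t : ℝ) < (1 + ε) ^ n) (N : ℕ) (hN : N = 2 ^ n + t)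
    (A : Finset ℕ) (hApos : ∀ a ∈ A, 0 < a) (hAcard : A.card = n)
    (hA : SumsetDistinctMod N A) (hAne : A.Nonempty) :
    (1 - ε) * N / 3 ≤ (A.max' hAne : ℝ) :=
  stmt0_general ε hε0 hε1 n t htlt N hN A hAcard hA hAne
end

section
/- Let k and n be integers with n > k ≥ 1, let N = 2^n + 2^k + 1, and assume 3 divides 2^{n-k} + 1 (equivalently 3 divides N - 1). Then there exists an n-element set A of positive integers that is sumset-distinct modulo N and satisfies max A ≤ N/3 + N/2^k. -/
open Finset

section Superincreasing

variable {α : Type*}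

theorem abs_sum_sub_sum_le_sum_abs [AddCommGroup α] [LinearOrder α] [IsOrderedAddMonoid α]
    {ι : Type*} [DecidableEq ι] (w : ι → α) {s S S' : Finset ι} (hS : S ⊆ s) (hS' : S' ⊆ s) :
    |∑ i ∈ S, w i - ∑ i ∈ S', w i| ≤ ∑ i ∈ s, |w i| := by
  rw [← inter_eq_right.mpr hS, ← inter_eq_right.mpr hS', ← sum_ite_mem, ← sum_ite_mem,
    ← sum_sub_distrib]
  refine (abs_sum_le_sum_abs _ _).trans (sum_le_sum fun i _ => ?_)
  split_ifs <;> simp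

theorem sum_range_abs_lt_of_two_mul_abs_le [Ring α] [LinearOrder α] [IsStrictOrderedRing α]
    (w : ℕ → α) (h0 : w 0 ≠ 0) (hw : ∀ i, 2 * |w i| ≤ |w (i + 1)|) (n : ℕ) :
    ∑ j ∈ range n, |w j| < |w n| := by
  induction n with
  | zero => simpa using h0
  | succ n ih =>
    calc ∑ j ∈ range (n + 1), |w j| < |w n| + |w n| := by
          rw [sum_range_succ]; exact add_lt_add_left ih _
      _ = 2 * |w n| := (two_mul _).symm
      _ ≤ |w (n + 1)| := hw n

variable [AddCommGroup α] [LinearOrder α] [IsOrderedAddMonoid α]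

theorem sum_ne_sum_of_mem_of_superincreasing (w : ℕ → α) {n : ℕ}
    (hn : ∑ j ∈ range n, |w j| < |w n|) {S S' : Finset ℕ} (hS : S ⊆ range (n + 1))
    (hS' : S' ⊆ range n) (hnS : n ∈ S) : ∑ i ∈ S, w i ≠ ∑ i ∈ S', w i := by
  intro h
  rw [← add_sum_erase S w hnS] at h
  have hS_erase : S.erase n ⊆ range n := subset_insert_iff.mp (range_add_one ▸ hS)
  have := abs_sum_sub_sum_le_sum_abs w hS' hS_erase
  rw [← eq_sub_of_add_eq h] at this
  exact this.not_gt hn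

theorem eq_of_sum_eq_of_superincreasing (w : ℕ → α) {n : ℕ}
    (hw : ∀ i < n, ∑ j ∈ range i, |w j| < |w i|) {S S' : Finset ℕ}
    (hS : S ⊆ range n) (hS' : S' ⊆ range n) (h : ∑ i ∈ S, w i = ∑ i ∈ S', w i) : S = S' := by
  induction n generalizing S S' with
  | zero => rw [subset_empty.mp hS, subset_empty.mp hS']
  | succ n ih =>
    have hwn := hw n n.lt_add_one
    have hw' : ∀ i < n, ∑ j ∈ range i, |w j| < |w i| := fun i hi => hw i (by omega)
    rw [range_add_one] at hS hS'
    by_cases hnS : n ∈ S <;> by_cases hnS' : n ∈ S'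
    · have : S.erase n = S'.erase n := by
        refine ih hw' (subset_insert_iff.mp hS) (subset_insert_iff.mp hS') ?_
        rw [← add_sum_erase S w hnS, ← add_sum_erase S' w hnS'] at h
        exact add_left_cancel h
      rw [← insert_erase hnS, ← insert_erase hnS', this]
    · exact absurd h (sum_ne_sum_of_mem_of_superincreasing w hwn (range_add_one ▸ hS)
        ((subset_insert_iff_of_notMem hnS').mp hS') hnS)
    · exact absurd h.symm (sum_ne_sum_of_mem_of_superincreasing w hwn (range_add_one ▸ hS')
        ((subset_insert_iff_of_notMem hnS).mp hS) hnS')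
    · exact ih hw' ((subset_insert_iff_of_notMem hnS).mp hS)
        ((subset_insert_iff_of_notMem hnS').mp hS') h

end Superincreasing

theorem eq_of_sum_modEq_of_superincreasing (w : ℕ → ℤ) {n : ℕ} {N : ℤ}
    (hw : ∀ i < n, ∑ j ∈ range i, |w j| < |w i|) (hN : ∑ j ∈ range n, |w j| < N)
    {S S' : Finset ℕ} (hS : S ⊆ range n) (hS' : S' ⊆ range n)
    (h : ∑ i ∈ S, w i ≡ ∑ i ∈ S', w i [ZMOD N]) : S = S' := by
  refine eq_of_sum_eq_of_superincreasing w hw hS hS' (sub_eq_zero.mp ?_)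
  exact Int.eq_zero_of_abs_lt_dvd h.symm.dvd
    ((abs_sum_sub_sum_le_sum_abs w hS hS').trans_lt hN)

theorem injOn_of_sum_modEq_imp_eq {ι : Type*} [DecidableEq ι] {f : ι → ℕ} {s : Finset ι}
    {N : ℕ} (hf : ∀ S ⊆ s, ∀ S' ⊆ s, ∑ i ∈ S, f i ≡ ∑ i ∈ S', f i [MOD N] → S = S') :
    Set.InjOn f s := fun i hi j hj hij =>
  singleton_inj.mp <| hf {i} (singleton_subset_iff.mpr hi) {j} (singleton_subset_iff.mpr hj)
    (by simp [hij, Nat.ModEq.refl])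

theorem sumsetDistinctMod_image {ι : Type*} [DecidableEq ι] {f : ι → ℕ} {s : Finset ι}
    {N : ℕ} (hf : ∀ S ⊆ s, ∀ S' ⊆ s, ∑ i ∈ S, f i ≡ ∑ i ∈ S', f i [MOD N] → S = S') :
    SumsetDistinctMod N (s.image f) := by
  intro B hB C hC hBC
  obtain ⟨S, hS, rfl⟩ := subset_image_iff.mp hB
  obtain ⟨S', hS', rfl⟩ := subset_image_iff.mp hC
  have hinj := injOn_of_sum_modEq_imp_eq hf
  rw [sum_image (hinj.mono hS), sum_image (hinj.mono hS')] at hBC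
  rw [hf S hS S' hS' hBC]

namespace SumsetDistinctMod

def weight (m i : ℕ) : ℤ := if i < m then -(-2) ^ i else 2 ^ i + 2 ^ (i - m)

def elem (N m i : ℕ) : ℕ :=
  if i < m then ((N - (-2) ^ i) / 3 : ℤ).toNat else (2 ^ i + 2 ^ (i - m)) / 3

variable {k m N : ℕ}

theorem abs_weight (m i : ℕ) :
    |weight m i| = if i < m then 2 ^ i else 2 ^ i + 2 ^ (i - m) := by
  unfold weight
  split_ifs
  · simp [abs_pow]
  · exact abs_of_pos (by positivity)

theorem two_mul_abs_weight_le (m i : ℕ) : 2 * |weight m i| ≤ |weight m (i + 1)| := by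
  simp only [abs_weight]
  split_ifs with h h' h'
  · rw [pow_succ]; linarith
  · rw [pow_succ, show i + 1 - m = 0 by omega]; linarith
  · omega
  · rw [show i + 1 - m = i - m + 1 by omega, pow_succ, pow_succ]; linarith

theorem sum_range_abs_weight_lt (m n : ℕ) : ∑ j ∈ range n, |weight m j| < |weight m n| :=
  sum_range_abs_lt_of_two_mul_abs_le _
    (abs_pos.mp (by rw [abs_weight]; split_ifs <;> positivity))
    (two_mul_abs_weight_le m) n

theorem abs_weight_lt {i : ℕ} (hi : i < m + k) : |weight m i| < 2 ^ (m + k) + 2 ^ k :=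
  calc |weight m i| ≤ ∑ j ∈ range (m + k), |weight m j| :=
        single_le_sum (f := fun j => |weight m j|) (fun _ _ => abs_nonneg _) (mem_range.mpr hi)
    _ < |weight m (m + k)| := sum_range_abs_weight_lt m (m + k)
    _ = 2 ^ (m + k) + 2 ^ k := by simp [abs_weight]

theorem three_mul_elem (hN : N = 2 ^ (m + k) + 2 ^ k + 1) (h3 : 3 ∣ 2 ^ m + 1) (i : ℕ) :
    3 * (elem N m i : ℤ) = (if i < m then (N : ℤ) else 0) + weight m i := by
  unfold elem
  split_ifs with hi
  · have h3' : (3 : ℤ) ∣ 2 ^ m + 1 := by exact_mod_cast h3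
    have hw : weight m i = -(-2) ^ i := if_pos hi
    -- `-2 ≡ 1 (mod 3)` and `N - 1 = 2^k (2^m + 1)`
    have hdvd : (3 : ℤ) ∣ N + weight m i := by
      have h1 : (3 : ℤ) ∣ (-2) ^ i - 1 := by simpa using sub_dvd_pow_sub_pow (-2 : ℤ) 1 i
      have h2 : (N : ℤ) + weight m i = 2 ^ k * (2 ^ m + 1) - ((-2) ^ i - 1) := by
        rw [hN, hw]; push_cast; ring
      rw [h2]
      exact dvd_sub (dvd_mul_of_dvd_right h3' _) h1
    have hnonneg : (0 : ℤ) ≤ N + weight m i := by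
      have := abs_weight_lt (k := k) (show i < m + k by omega)
      rw [hN]; push_cast; linarith [neg_abs_le (weight m i)]
    rw [show (N : ℤ) - (-2) ^ i = N + weight m i by rw [hw]; ring,
      Int.toNat_of_nonneg (Int.ediv_nonneg hnonneg (by norm_num)), Int.mul_ediv_cancel' hdvd]
  · have hdvd : 3 ∣ 2 ^ i + 2 ^ (i - m) := by
      rw [show 2 ^ i + 2 ^ (i - m) = 2 ^ (i - m) * (2 ^ m + 1) by
        rw [mul_add, ← pow_add, Nat.sub_add_cancel (by omega), mul_one]]
      exact dvd_mul_of_dvd_right h3 _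
    rw [zero_add, weight, if_neg hi]
    exact_mod_cast Nat.mul_div_cancel' hdvd

theorem three_mul_elem_modEq (hN : N = 2 ^ (m + k) + 2 ^ k + 1) (h3 : 3 ∣ 2 ^ m + 1)
    (i : ℕ) : 3 * (elem N m i : ℤ) ≡ weight m i [ZMOD N] := by
  rw [three_mul_elem hN h3]
  split_ifs
  · exact Int.add_modEq_left
  · rw [zero_add]

theorem elem_pos (hN : N = 2 ^ (m + k) + 2 ^ k + 1) (h3 : 3 ∣ 2 ^ m + 1) {i : ℕ}
    (hi : i < m + k) : 0 < elem N m i := by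
  suffices 0 < 3 * (elem N m i : ℤ) by omega
  rw [three_mul_elem hN h3]
  split_ifs with him
  · have := abs_weight_lt hi
    rw [hN]; push_cast; linarith [neg_abs_le (weight m i)]
  · rw [zero_add, weight, if_neg him]; positivity

theorem three_mul_elem_le (hN : N = 2 ^ (m + k) + 2 ^ k + 1) (h3 : 3 ∣ 2 ^ m + 1) {i : ℕ}
    (hi : i < m + k) : 3 * (elem N m i : ℤ) ≤ N + 2 ^ m := by
  rw [three_mul_elem hN h3]
  have hw := le_abs_self (weight m i)
  split_ifs with him
  · rw [abs_weight, if_pos him] at hw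
    linarith [pow_le_pow_right₀ (by norm_num : (1 : ℤ) ≤ 2) him.le]
  · have := abs_weight_lt hi
    rw [hN]; push_cast; linarith [pow_pos (two_pos : (0 : ℤ) < 2) m]

theorem elem_le (hN : N = 2 ^ (m + k) + 2 ^ k + 1) (h3 : 3 ∣ 2 ^ m + 1) {i : ℕ}
    (hi : i < m + k) : (elem N m i : ℝ) ≤ N / 3 + N / 2 ^ k := by
  have h : (3 * elem N m i : ℝ) ≤ N + 2 ^ m := by exact_mod_cast three_mul_elem_le hN h3 hi
  have hm : (2 : ℝ) ^ m ≤ N / 2 ^ k := by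
    rw [le_div_iff₀ (by positivity), ← pow_add, hN]
    push_cast
    linarith [pow_pos (two_pos : (0 : ℝ) < 2) k]
  linarith [pow_pos (two_pos : (0 : ℝ) < 2) m]

theorem sum_elem_modEq_imp_eq (hN : N = 2 ^ (m + k) + 2 ^ k + 1) (h3 : 3 ∣ 2 ^ m + 1) :
    ∀ S ⊆ range (m + k), ∀ S' ⊆ range (m + k),
      ∑ i ∈ S, elem N m i ≡ ∑ i ∈ S', elem N m i [MOD N] → S = S' := by
  intro S hS S' hS' h
  have h3S : ∀ T : Finset ℕ, ∑ i ∈ T, weight m i ≡ 3 * ∑ i ∈ T, (elem N m i : ℤ) [ZMOD N] :=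
    fun T => by
      rw [mul_sum]; exact Int.ModEq.sum fun i _ => (three_mul_elem_modEq hN h3 i).symm
  refine eq_of_sum_modEq_of_superincreasing (N := N) (weight m)
    (fun i _ => sum_range_abs_weight_lt m i) ?_ hS hS' ?_
  · rw [hN]
    push_cast
    exact (sum_range_abs_weight_lt m (m + k)).trans_le (by simp [abs_weight])
  · refine (h3S S).trans ((Int.ModEq.mul_left 3 ?_).trans (h3S S').symm)
    exact_mod_cast Int.natCast_modEq_iff.mpr h

end SumsetDistinctMod

theorem stmt1_general (k n : ℕ) (hkn : k < n) (N : ℕ) (hN : N = 2 ^ n + 2 ^ k + 1)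
    (h3 : 3 ∣ 2 ^ (n - k) + 1) :
    ∃ A : Finset ℕ, (∀ a ∈ A, 0 < a) ∧ A.card = n ∧ SumsetDistinctMod N A ∧
      ∀ a ∈ A, (a : ℝ) ≤ (N : ℝ) / 3 + (N : ℝ) / 2 ^ k := by
  obtain ⟨m, rfl⟩ : ∃ m, n = m + k := ⟨n - k, by omega⟩
  rw [Nat.add_sub_cancel] at h3
  have hdistinct := SumsetDistinctMod.sum_elem_modEq_imp_eq hN h3
  refine ⟨(range (m + k)).image (SumsetDistinctMod.elem N m), ?_, ?_,
    sumsetDistinctMod_image hdistinct, ?_⟩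
  · simp only [mem_image, mem_range]
    rintro _ ⟨i, hi, rfl⟩
    exact SumsetDistinctMod.elem_pos hN h3 hi
  · rw [card_image_of_injOn (injOn_of_sum_modEq_imp_eq hdistinct), card_range]
  · simp only [mem_image, mem_range]
    rintro _ ⟨i, hi, rfl⟩
    exact SumsetDistinctMod.elem_le hN h3 hi

theorem stmt1 (k n : ℕ) (hk : 1 ≤ k) (hkn : k < n) (N : ℕ) (hN : N = 2 ^ n + 2 ^ k + 1)
    (h3 : 3 ∣ 2 ^ (n - k) + 1) :
    ∃ A : Finset ℕ, (∀ a ∈ A, 0 < a) ∧ A.card = n ∧ SumsetDistinctMod N A ∧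
      ∀ a ∈ A, (a : ℝ) ≤ (N : ℝ) / 3 + (N : ℝ) / 2 ^ k :=
  stmt1_general k n hkn N hN h3
end

section
/- Fix integers t ≥ 0 and n_0 ≥ 1, and assume that for every m ≥ n_0, every m-element set B of positive integers that is sumset-distinct modulo 2^m + t satisfies max B ≥ (2^m + t)/3. Let A = {a_1, a_2, …, a_n} with a_1 < a_2 < … < a_n be an n-element set of positive integers all of whose 2^n subset sums are pairwise distinct (as integers), and suppose a_1 + a_2 + … + a_n < 2^n + t. Then for every index i with n_0 ≤ i ≤ n, we have 2^{i-1} ≤ a_i ≤ 2^{i-1} + t. -/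
open Finset

section DistinctSubsetSums

variable {ι : Type*} {a : ι → ℕ} {s : Finset ι}

theorem two_pow_card_le_sum_add_one (h : Set.InjOn (fun B => ∑ i ∈ B, a i) s.powerset) :
    2 ^ #s ≤ ∑ i ∈ s, a i + 1 :=
  calc 2 ^ #s = #s.powerset := (card_powerset s).symm
    _ ≤ #(range (∑ i ∈ s, a i + 1)) := by
      refine card_le_card_of_injOn _ (fun B hB => ?_) h
      simpa [Nat.lt_succ_iff] using sum_le_sum_of_subset (mem_powerset.mp hB)
    _ = ∑ i ∈ s, a i + 1 := card_range _

theorem two_pow_card_le_of_sum_lt_two_mul [DecidableEq ι] {x : ι} (hx : x ∉ s)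
    (h : Set.InjOn (fun B => ∑ i ∈ B, a i) (insert x s).powerset)
    (hs : ∑ i ∈ s, a i < 2 * a x) : 2 ^ #s ≤ a x := by
  have hsum_lt : ∀ B ∈ s.powerset, ∑ i ∈ B, a i < 2 * a x := fun B hB =>
    (sum_le_sum_of_subset (mem_powerset.mp hB)).trans_lt hs
  have hsub : s.powerset ⊆ (insert x s).powerset := powerset_mono.mpr (subset_insert x s)
  have hshift : ∀ B ∈ s.powerset, ∀ C ∈ s.powerset, ∑ i ∈ C, a i ≠ ∑ i ∈ B, a i + a x := by
    intro B hB C hC hBC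
    have hxB : x ∉ B := fun hxB => hx (mem_powerset.mp hB hxB)
    have hxC : x ∉ C := fun hxC => hx (mem_powerset.mp hC hxC)
    have : insert x B = C :=
      h (mem_powerset.mpr (insert_subset_insert x (mem_powerset.mp hB))) (hsub hC)
        (by simp only [sum_insert hxB, hBC, add_comm])
    exact hxC (this ▸ mem_insert_self x B)
  calc 2 ^ #s = #s.powerset := (card_powerset s).symm
    _ ≤ #(range (a x)) := by
      refine card_le_card_of_injOn (fun B => (∑ i ∈ B, a i) % a x) (fun B _ => ?_) ?_
      · simpa using Nat.mod_lt _ (by omega)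
      · intro B hB C hC hBC
        wlog hle : ∑ i ∈ B, a i ≤ ∑ i ∈ C, a i generalizing B C
        · exact (this hC hB hBC.symm (by omega)).symm
        have hqB : (∑ i ∈ B, a i) / a x < 2 :=
          Nat.div_lt_of_lt_mul (mul_comm (a x) 2 ▸ hsum_lt B hB)
        have hqC : (∑ i ∈ C, a i) / a x < 2 :=
          Nat.div_lt_of_lt_mul (mul_comm (a x) 2 ▸ hsum_lt C hC)
        have := Nat.div_add_mod (∑ i ∈ B, a i) (a x)
        have := Nat.div_add_mod (∑ i ∈ C, a i) (a x)
        have := hshift B hB C hC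
        simp only at hBC
        refine h (hsub hB) (hsub hC) ?_
        interval_cases (∑ i ∈ B, a i) / a x <;> interval_cases (∑ i ∈ C, a i) / a x <;>
          simp only <;> omega
    _ = a x := card_range _

theorem sumsetDistinctMod_image_s2 {N : ℕ} (ha : Set.InjOn a s)
    (h : Set.InjOn (fun B => ∑ i ∈ B, a i) s.powerset) (hN : ∑ i ∈ s, a i < N) :
    SumsetDistinctMod N (s.image a) := by
  intro B hB C hC hBC
  obtain ⟨B, hBs, rfl⟩ := subset_image_iff.mp hB
  obtain ⟨C, hCs, rfl⟩ := subset_image_iff.mp hC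
  have hlt : ∀ D ⊆ s, ∑ i ∈ D, a i < N := fun D hD => (sum_le_sum_of_subset hD).trans_lt hN
  rw [sum_image (ha.mono hBs), sum_image (ha.mono hCs), Nat.mod_eq_of_lt (hlt B hBs),
    Nat.mod_eq_of_lt (hlt C hCs)] at hBC
  rw [h (mem_powerset.mpr hBs) (mem_powerset.mpr hCs) hBC]

end DistinctSubsetSums

section Prefix

variable {n : ℕ} {a : Fin n → ℕ}

theorem sum_Iic_eq_add_sum_Iio (i : Fin n) : ∑ j ∈ Iic i, a j = a i + ∑ j ∈ Iio i, a j := by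
  rw [← Iio_insert, sum_insert (by simp)]

theorem max'_image_Iic (ha : Monotone a) (i : Fin n) (h : ((Iic i).image a).Nonempty) :
    ((Iic i).image a).max' h = a i :=
  (max'_eq_iff _ h _).mpr
    ⟨mem_image_of_mem a (mem_Iic.mpr le_rfl), by simpa using fun j hj => ha hj⟩

theorem three_mul_le_sum_Iic_of_lt_two_pow
    (hdss : Function.Injective fun B : Finset (Fin n) => ∑ i ∈ B, a i) {i : Fin n}
    (hi : a i < 2 ^ (i : ℕ)) : 3 * a i ≤ ∑ j ∈ Iic i, a j := by
  have h2 : 2 * a i ≤ ∑ j ∈ Iio i, a j := by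
    by_contra! hlt
    have := two_pow_card_le_of_sum_lt_two_mul (s := Iio i) (by simp)
      (by rw [Iio_insert]; exact hdss.injOn) hlt
    rw [Fin.card_Iio] at this
    omega
  rw [sum_Iic_eq_add_sum_Iio]
  omega

theorem two_pow_le_of_sum_Iic_lt {t n₀ : ℕ}
    (H : ∀ m : ℕ, n₀ ≤ m → ∀ B : Finset ℕ, (∀ b ∈ B, 0 < b) → B.card = m →
      SumsetDistinctMod (2 ^ m + t) B → ∀ hB : B.Nonempty,
        ((2 ^ m + t : ℕ) : ℝ) / 3 ≤ (B.max' hB : ℝ))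
    (hmono : StrictMono a) (hpos : ∀ i, 0 < a i)
    (hdss : Function.Injective fun B : Finset (Fin n) => ∑ i ∈ B, a i)
    {i : Fin n} (hi : n₀ ≤ i + 1) (hS : ∑ j ∈ Iic i, a j < 2 ^ ((i : ℕ) + 1) + t) :
    2 ^ (i : ℕ) ≤ a i := by
  by_contra! hlt
  have hmax := H (i + 1) hi ((Iic i).image a) (by simpa using fun j _ => hpos j)
    (by rw [card_image_of_injective _ hmono.injective, Fin.card_Iic])
    (sumsetDistinctMod_image_s2 hmono.injective.injOn hdss.injOn hS) (by simp)
  rw [max'_image_Iic hmono.monotone, div_le_iff₀ (by norm_num)] at hmax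
  have : 2 ^ ((i : ℕ) + 1) + t ≤ a i * 3 := by exact_mod_cast hmax
  have := three_mul_le_sum_Iic_of_lt_two_pow hdss hlt
  omega

theorem sum_Iic_lt_of_two_pow_le {t n₀ : ℕ}
    (hstep : ∀ i : Fin n, n₀ ≤ i + 1 → ∑ j ∈ Iic i, a j < 2 ^ ((i : ℕ) + 1) + t →
      2 ^ (i : ℕ) ≤ a i)
    (hsum : ∑ i, a i < 2 ^ n + t) (i : Fin n) (hi : n₀ ≤ i + 1) :
    ∑ j ∈ Iic i, a j < 2 ^ ((i : ℕ) + 1) + t := by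
  induction hk : n - (i + 1) generalizing i with
  | zero =>
    rwa [show Iic i = univ from eq_univ_of_forall fun j => mem_Iic.mpr (Fin.le_def.mpr (by omega)),
      show (i : ℕ) + 1 = n by omega]
  | succ k ih =>
    obtain ⟨i', hi'⟩ : ∃ i' : Fin n, (i' : ℕ) = i + 1 := ⟨⟨i + 1, by omega⟩, rfl⟩
    have hS' := ih i' (by omega) (by omega)
    have hlow := hstep i' (by omega) hS'
    have hIio : Iio i' = Iic i := by
      ext j
      simp only [mem_Iio, mem_Iic, Fin.lt_def, Fin.le_def]
      omega
    rw [sum_Iic_eq_add_sum_Iio, hIio, hi'] at hS'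
    rw [hi', pow_succ] at hlow
    rw [pow_succ] at hS' ⊢
    omega

end Prefix

theorem stmt2_general (t n₀ : ℕ)
    (H : ∀ m : ℕ, n₀ ≤ m → ∀ B : Finset ℕ, (∀ b ∈ B, 0 < b) → B.card = m →
      SumsetDistinctMod (2 ^ m + t) B → ∀ hB : B.Nonempty,
        ((2 ^ m + t : ℕ) : ℝ) / 3 ≤ (B.max' hB : ℝ))
    (n : ℕ) (a : Fin n → ℕ) (hmono : StrictMono a) (hpos : ∀ i, 0 < a i)
    (hdss : ∀ B C : Finset (Fin n), ∑ i ∈ B, a i = ∑ i ∈ C, a i → B = C)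
    (hsum : ∑ i, a i < 2 ^ n + t) :
    ∀ i : Fin n, n₀ ≤ (i : ℕ) + 1 → 2 ^ (i : ℕ) ≤ a i ∧ a i ≤ 2 ^ (i : ℕ) + t := by
  have hinj : Function.Injective fun B : Finset (Fin n) => ∑ i ∈ B, a i := hdss
  intro i hi
  have hstep := fun i : Fin n => two_pow_le_of_sum_Iic_lt (i := i) H hmono hpos hinj
  have hS := sum_Iic_lt_of_two_pow_le hstep hsum i hi
  have hlow := hstep i hi hS
  have hprefix := two_pow_card_le_sum_add_one (s := Iio i) hinj.injOn
  rw [Fin.card_Iio] at hprefix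
  rw [sum_Iic_eq_add_sum_Iio, pow_succ] at hS
  exact ⟨hlow, by omega⟩

theorem stmt2 (t n₀ : ℕ) (hn₀ : 1 ≤ n₀)
    (H : ∀ m : ℕ, n₀ ≤ m → ∀ B : Finset ℕ, (∀ b ∈ B, 0 < b) → B.card = m →
      SumsetDistinctMod (2 ^ m + t) B → ∀ hB : B.Nonempty,
        ((2 ^ m + t : ℕ) : ℝ) / 3 ≤ (B.max' hB : ℝ))
    (n : ℕ) (a : Fin n → ℕ) (hmono : StrictMono a) (hpos : ∀ i, 0 < a i)
    (hdss : ∀ B C : Finset (Fin n), ∑ i ∈ B, a i = ∑ i ∈ C, a i → B = C)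
    (hsum : ∑ i, a i < 2 ^ n + t) :
    ∀ i : Fin n, n₀ ≤ (i : ℕ) + 1 → 2 ^ (i : ℕ) ≤ a i ∧ a i ≤ 2 ^ (i : ℕ) + t :=
  stmt2_general t n₀ H n a hmono hpos hdss hsum
end

section
/- An n-element set A of positive integers is sumset-distinct modulo N = 2^n if and only if the 2-adic valuation v_2 restricted to A is a bijection from A onto {0, 1, …, n-1}; that is, if and only if the elements of A can be ordered as a_0, a_1, …, a_{n-1} with v_2(a_j) = j for every 0 ≤ j ≤ n-1. -/
private lemma no_modeq (n : ℕ) (A P Q : Finset ℕ) (hpos : ∀ a ∈ A, 0 < a)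
    (hinj : Set.InjOn (fun a => padicValNat 2 a) ↑A)
    (hvlt : ∀ a ∈ A, padicValNat 2 a < n)
    (hP : P ⊆ A) (hQ : Q ⊆ A) (hPQ : Disjoint P Q) (a : ℕ) (haP : a ∈ P)
    (hmin : ∀ x ∈ P ∪ Q, padicValNat 2 a ≤ padicValNat 2 x) :
    ¬ (∑ x ∈ P, x) ≡ (∑ x ∈ Q, x) [MOD 2 ^ n] := by
  intro h
  set j := padicValNat 2 a with hj
  have hjn : j < n := hvlt a (hP haP)
  have hdvd_ne : ∀ x ∈ P ∪ Q, x ≠ a → (2:ℕ) ^ (j+1) ∣ x := by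
    intro x hx hxa
    have hxA : x ∈ A := by
      rcases Finset.mem_union.1 hx with h' | h'
      · exact hP h'
      · exact hQ h'
    have hlt : j < padicValNat 2 x := by
      refine lt_of_le_of_ne (hmin x hx) fun he => hxa ?_
      exact hinj hxA (hP haP) he.symm
    exact dvd_trans (pow_dvd_pow 2 hlt) pow_padicValNat_dvd
  have h1 : (2:ℕ) ^ (j+1) ∣ ∑ x ∈ P.erase a, x :=
    Finset.dvd_sum fun x hx => hdvd_ne x
      (Finset.mem_union_left _ (Finset.mem_of_mem_erase hx)) (Finset.ne_of_mem_erase hx)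
  have h2 : (2:ℕ) ^ (j+1) ∣ ∑ x ∈ Q, x :=
    Finset.dvd_sum fun x hx => hdvd_ne x (Finset.mem_union_right _ hx)
      (fun he => Finset.disjoint_left.1 hPQ haP (he ▸ hx))
  have hsplit : a + ∑ x ∈ P.erase a, x = ∑ x ∈ P, x :=
    Finset.add_sum_erase P (fun x : ℕ => x) haP
  have hmd : (∑ x ∈ P, x) ≡ (∑ x ∈ Q, x) [MOD 2 ^ (j+1)] :=
    h.of_dvd (pow_dvd_pow 2 hjn)
  have hPa : (∑ x ∈ P, x) ≡ a [MOD 2 ^ (j+1)] := by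
    rw [← hsplit]
    have h0 : (∑ x ∈ P.erase a, x) ≡ 0 [MOD 2 ^ (j+1)] :=
      (Nat.modEq_zero_iff_dvd).2 h1
    simpa using (Nat.ModEq.refl a).add h0
  have hQ0 : (∑ x ∈ Q, x) ≡ 0 [MOD 2 ^ (j+1)] := (Nat.modEq_zero_iff_dvd).2 h2
  have hfin : (2:ℕ) ^ (j+1) ∣ a :=
    (Nat.modEq_zero_iff_dvd).1 (hPa.symm.trans (hmd.trans hQ0))
  exact pow_succ_padicValNat_not_dvd (hpos a (hP haP)).ne' hfin

private lemma exists_val (n : ℕ) (A : Finset ℕ) (hcard : A.card = n)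
    (hd : SumsetDistinctMod (2 ^ n) A) :
    ∀ j < n, ∃ a ∈ A, padicValNat 2 a = j := by
  intro j hj
  set m := j + 1 with hm
  set ζ : ℂ := Complex.exp (2 * Real.pi * Complex.I / ((2 ^ m : ℕ) : ℂ)) with hζ
  have hprim : IsPrimitiveRoot ζ (2 ^ m) :=
    Complex.isPrimitiveRoot_exp _ (by positivity)
  have hζ2n : ζ ^ (2 ^ n) = 1 :=
    (hprim.pow_eq_one_iff_dvd _).2 (pow_dvd_pow 2 (by omega))
  have hne1 : ζ ≠ 1 := hprim.ne_one (Nat.one_lt_two_pow_iff.2 (by omega))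
  have hmodpow : ∀ x : ℕ, ζ ^ (x % 2 ^ n) = ζ ^ x := by
    intro x
    conv_rhs => rw [← Nat.div_add_mod x (2 ^ n)]
    rw [pow_add, pow_mul, hζ2n, one_pow, one_mul]
  have hgeom : ∑ r ∈ Finset.range (2 ^ n), ζ ^ r = 0 := by
    rw [geom_sum_eq hne1, hζ2n, sub_self, zero_div]
  have hinj' : ∀ t ∈ A.powerset, ∀ u ∈ A.powerset,
      (∑ x ∈ t, x) % 2 ^ n = (∑ x ∈ u, x) % 2 ^ n → t = u :=
    fun t ht u hu h => hd t (Finset.mem_powerset.1 ht) u (Finset.mem_powerset.1 hu) h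
  have himg : (A.powerset.image fun t => (∑ x ∈ t, x) % 2 ^ n) = Finset.range (2 ^ n) := by
    apply Finset.eq_of_subset_of_card_le
    · intro r hr
      simp only [Finset.mem_image] at hr
      obtain ⟨t, _, rfl⟩ := hr
      exact Finset.mem_range.2 (Nat.mod_lt _ (by positivity))
    · rw [Finset.card_range, Finset.card_image_of_injOn
        (fun t ht u hu h => hinj' t ht u hu h), Finset.card_powerset, hcard]
  have hsum0 : ∑ t ∈ A.powerset, ζ ^ (∑ x ∈ t, x) = 0 := by
    calc ∑ t ∈ A.powerset, ζ ^ (∑ x ∈ t, x)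
        = ∑ t ∈ A.powerset, ζ ^ ((∑ x ∈ t, x) % 2 ^ n) := by
          exact Finset.sum_congr rfl fun t _ => (hmodpow _).symm
      _ = ∑ r ∈ A.powerset.image (fun t => (∑ x ∈ t, x) % 2 ^ n), ζ ^ r :=
          (Finset.sum_image hinj').symm
      _ = 0 := by rw [himg]; exact hgeom
  have hprod : ∏ a ∈ A, (ζ ^ a + 1) = 0 := by
    rw [Finset.prod_add]
    simp only [Finset.prod_const_one, mul_one]
    rw [Finset.sum_congr rfl fun t _ => Finset.prod_pow_eq_pow_sum t (fun i => i) ζ]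
    exact hsum0
  obtain ⟨a, haA, ha⟩ := Finset.prod_eq_zero_iff.1 hprod
  have hζa : ζ ^ a = -1 := by linear_combination ha
  have hζ2j : ζ ^ (2 ^ j) = -1 := by
    have hsq : (ζ ^ (2 ^ j)) ^ 2 = 1 := by
      rw [← pow_mul, ← pow_succ]
      exact (hprim.pow_eq_one_iff_dvd _).2 dvd_rfl
    have hz : (ζ ^ (2 ^ j) - 1) * (ζ ^ (2 ^ j) + 1) = 0 := by linear_combination hsq
    rcases mul_eq_zero.1 hz with h' | h'
    · exfalso
      have h1 : ζ ^ (2 ^ j) = 1 := by linear_combination h'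
      have := (hprim.pow_eq_one_iff_dvd _).1 h1
      rw [Nat.pow_dvd_pow_iff_le_right (by norm_num)] at this
      omega
    · linear_combination h'
  have h1 : ζ ^ (a + 2 ^ j) = 1 := by rw [pow_add, hζa, hζ2j]; ring
  obtain ⟨k, hk⟩ := (hprim.pow_eq_one_iff_dvd _).1 h1
  have hjpos : 0 < (2:ℕ) ^ j := by positivity
  have hk0 : k ≠ 0 := by rintro rfl; omega
  obtain ⟨l, hl⟩ : ∃ l, l + 1 = 2 * k := ⟨2 * k - 1, by omega⟩
  have ha' : a = 2 ^ j * l := by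
    have h2m : (2:ℕ) ^ m = 2 ^ j * 2 := pow_succ 2 j
    have key : 2 ^ j * l + 2 ^ j = 2 ^ j * (2 * k) := by rw [← hl]; ring
    have hk' : a + 2 ^ j = 2 ^ j * (2 * k) := by rw [hk, h2m]; ring
    have := hk'.trans key.symm
    omega
  refine ⟨a, haA, ?_⟩
  rw [ha', padicValNat.mul (by positivity) (by omega), padicValNat.prime_pow,
    padicValNat.eq_zero_of_not_dvd (by omega)]
  omega

theorem stmt3 (n : ℕ) (A : Finset ℕ) (hpos : ∀ a ∈ A, 0 < a) (hcard : A.card = n) :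
    SumsetDistinctMod (2 ^ n) A ↔
      Set.BijOn (fun a => padicValNat 2 a) (↑A) (↑(Finset.range n)) := by
  constructor
  · intro hd
    have hsurj := exists_val n A hcard hd
    have himg : A.image (fun a => padicValNat 2 a) = Finset.range n := by
      refine (Finset.eq_of_subset_of_card_le ?_ ?_).symm
      · intro r hr
        obtain ⟨a, ha, hva⟩ := hsurj r (Finset.mem_range.1 hr)
        exact Finset.mem_image.2 ⟨a, ha, hva⟩
      · exact le_trans Finset.card_image_le (by rw [hcard, Finset.card_range])
    have hinj : Set.InjOn (fun a => padicValNat 2 a) ↑A :=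
      Finset.injOn_of_card_image_eq (by rw [himg, Finset.card_range, hcard])
    refine ⟨?_, hinj, ?_⟩
    · intro a ha
      have : padicValNat 2 a ∈ Finset.range n := by
        rw [← himg]; exact Finset.mem_image.2 ⟨a, ha, rfl⟩
      exact Finset.mem_coe.2 this
    · intro r hr
      rw [← Finset.coe_image, himg]
      exact hr
  · intro hbij B hB C hC hsum
    have hinj := hbij.injOn
    have hvlt : ∀ a ∈ A, padicValNat 2 a < n := fun a ha =>
      Finset.mem_range.1 (Finset.mem_coe.1 (hbij.mapsTo ha))
    by_contra hne
    have hD : ((B \ C) ∪ (C \ B)).Nonempty := by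
      rw [Finset.nonempty_iff_ne_empty]
      intro h
      rw [Finset.union_eq_empty, Finset.sdiff_eq_empty_iff_subset,
        Finset.sdiff_eq_empty_iff_subset] at h
      exact hne (Finset.Subset.antisymm h.1 h.2)
    obtain ⟨a, haD, hamin⟩ :=
      Finset.exists_min_image _ (fun x => padicValNat 2 x) hD
    have hBC : B \ C ⊆ A := fun x hx => hB (Finset.mem_sdiff.1 hx).1
    have hCB : C \ B ⊆ A := fun x hx => hC (Finset.mem_sdiff.1 hx).1
    have hdisj : Disjoint (B \ C) (C \ B) := disjoint_sdiff_sdiff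
    have hmm : (∑ x ∈ B \ C, x) ≡ (∑ x ∈ C \ B, x) [MOD 2 ^ n] := by
      have e1 : ∑ x ∈ B ∩ C, x + ∑ x ∈ B \ C, x = ∑ x ∈ B, x :=
        Finset.sum_inter_add_sum_sdiff B C (fun x => x)
      have e2 : ∑ x ∈ B ∩ C, x + ∑ x ∈ C \ B, x = ∑ x ∈ C, x := by
        rw [Finset.inter_comm]
        exact Finset.sum_inter_add_sum_sdiff C B (fun x => x)
      refine Nat.ModEq.add_left_cancel' (∑ x ∈ B ∩ C, x) ?_
      rw [e1, e2]
      exact hsum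
    rcases Finset.mem_union.1 haD with haBC | haCB
    · exact no_modeq n A (B \ C) (C \ B) hpos hinj hvlt hBC hCB hdisj a haBC hamin hmm
    · refine no_modeq n A (C \ B) (B \ C) hpos hinj hvlt hCB hBC hdisj.symm a haCB
        (fun x hx => hamin x ?_) hmm.symm
      rw [Finset.union_comm]
      exact hx
end

section
/- Let n ≥ 1 and N = 2^n + 1. An n-element set A of positive integers is sumset-distinct modulo N if and only if there exist an integer λ coprime to N and signs ε_0, ε_1, …, ε_{n-1} ∈ {1, -1} such that the image of A in ℤ/Nℤ equals { ε_i · λ · 2^i (mod N) : 0 ≤ i ≤ n-1 }. -/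
open Finset

/-- `V` is the disjoint union of `W` and its translate `W + b`. -/
def IsSplitBy {G : Type*} [AddGroup G] (V W : Set G) (b : G) : Prop :=
  (∀ x, x ∈ V ↔ x ∈ W ∨ x - b ∈ W) ∧ ∀ x ∈ W, x + b ∉ W

lemma IsSplitBy.neg {G : Type*} [AddCommGroup G] {V W : Set G} {b : G} (h : IsSplitBy V W b) :
    IsSplitBy V {x | x - b ∈ W} (-b) := by
  refine ⟨fun x => ?_, fun x hx hx' => h.2 (x - b - b) ?_ ?_⟩
  · simp only [Set.mem_ofPred_eq, sub_neg_eq_add, add_sub_cancel_right, h.1 x, or_comm]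
  · simpa [sub_eq_add_neg, add_assoc] using hx'
  · simpa using hx

section SubsetSums

variable {α β G : Type*} [AddCommGroup G] {f : α → G} {s t : Finset α}

def HasDistinctSubsetSums (f : α → G) (s : Finset α) : Prop :=
  Set.InjOn (fun B => ∑ i ∈ B, f i) s.powerset

lemma HasDistinctSubsetSums.mono (hf : HasDistinctSubsetSums f s) (hts : t ⊆ s) :
    HasDistinctSubsetSums f t :=
  Set.InjOn.mono (coe_subset.mpr (powerset_mono.mpr hts)) hf

lemma HasDistinctSubsetSums.injOn (hf : HasDistinctSubsetSums f s) : Set.InjOn f s :=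
  fun i hi j hj hij => singleton_inj.mp <| hf (by simpa using hi) (by simpa using hj) (by simpa)

variable [DecidableEq G]

def subsetSums (f : α → G) (s : Finset α) : Finset G :=
  s.powerset.image fun B => ∑ i ∈ B, f i

lemma mem_subsetSums {x : G} : x ∈ subsetSums f s ↔ ∃ B ⊆ s, ∑ i ∈ B, f i = x := by
  simp [subsetSums]

lemma hasDistinctSubsetSums_iff_card :
    HasDistinctSubsetSums f s ↔ (subsetSums f s).card = 2 ^ s.card := by
  rw [subsetSums, ← card_powerset, card_image_iff, HasDistinctSubsetSums]

lemma subsetSums_id_image (hf : Set.InjOn f s) : subsetSums id (s.image f) = subsetSums f s := by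
  rw [subsetSums, subsetSums, powerset_image, image_image]
  refine image_congr fun B hB => ?_
  rw [Function.comp_apply, sum_image fun i hi j hj =>
    hf (mem_powerset.mp hB hi) (mem_powerset.mp hB hj)]
  rfl

lemma HasDistinctSubsetSums.of_image_eq [DecidableEq β] {g : β → G} {u : Finset β}
    (hg : HasDistinctSubsetSums g u) (h : s.image f = u.image g) (hcard : s.card = u.card) :
    HasDistinctSubsetSums f s := by
  have hf : Set.InjOn f s := card_image_iff.mp <| by rw [h, card_image_of_injOn hg.injOn, hcard]
  rw [hasDistinctSubsetSums_iff_card, ← subsetSums_id_image hf, h, subsetSums_id_image hg.injOn,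
    hcard]
  exact hasDistinctSubsetSums_iff_card.mp hg

lemma HasDistinctSubsetSums.isSplitBy [DecidableEq α] (hf : HasDistinctSubsetSums f s) {a : α}
    (ha : a ∈ s) : IsSplitBy (subsetSums f s : Set G) (subsetSums f (s.erase a)) (f a) := by
  refine ⟨fun x => ?_, fun x hx hxa => ?_⟩
  · simp only [mem_coe, mem_subsetSums]
    constructor
    · rintro ⟨B, hB, rfl⟩
      by_cases haB : a ∈ B
      · refine .inr ⟨B.erase a, erase_subset_erase a hB, ?_⟩
        rw [← sum_erase_add B f haB, add_sub_cancel_right]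
      · exact .inl ⟨B, fun i hi => mem_erase.mpr ⟨fun h => haB (h ▸ hi), hB hi⟩, rfl⟩
    · rintro (⟨B, hB, rfl⟩ | ⟨B, hB, hBx⟩)
      · exact ⟨B, hB.trans (erase_subset a s), rfl⟩
      · refine ⟨insert a B, insert_subset ha (hB.trans (erase_subset a s)), ?_⟩
        rw [sum_insert fun h => notMem_erase a s (hB h), hBx, add_sub_cancel]
  · simp only [mem_coe, mem_subsetSums] at hx hxa
    obtain ⟨B, hB, rfl⟩ := hx
    obtain ⟨C, hC, hCB⟩ := hxa
    have haB : a ∉ B := fun h => notMem_erase a s (hB h)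
    have hBC : insert a B = C := hf
      (mem_coe.mpr (mem_powerset.mpr (insert_subset ha (hB.trans (erase_subset a s)))))
      (mem_coe.mpr (mem_powerset.mpr (hC.trans (erase_subset a s))))
      (by simp [sum_insert haB, hCB, add_comm])
    exact notMem_erase a s (hC (hBC ▸ mem_insert_self a B))

end SubsetSums

section SignedBinary

variable {c : ℕ → ℤ} {n : ℕ}

lemma abs_sum_mul_two_pow_lt (hc : ∀ i < n, |c i| ≤ 1) :
    |∑ i ∈ range n, c i * 2 ^ i| < 2 ^ n := by
  induction n with
  | zero => simp
  | succ n ih =>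
    have hn : |c n * 2 ^ n| ≤ 2 ^ n := by
      rw [abs_mul, abs_pow, abs_two]
      exact mul_le_of_le_one_left (by positivity) (hc n n.lt_succ_self)
    calc |∑ i ∈ range (n + 1), c i * 2 ^ i|
        ≤ |∑ i ∈ range n, c i * 2 ^ i| + |c n * 2 ^ n| := by
          rw [sum_range_succ]; exact abs_add_le _ _
      _ < 2 ^ (n + 1) := by
          rw [pow_succ]; linarith [ih fun i hi => hc i (by omega)]

lemma eq_zero_of_sum_mul_two_pow_eq_zero (hc : ∀ i < n, |c i| ≤ 1)
    (h : ∑ i ∈ range n, c i * 2 ^ i = 0) : ∀ i < n, c i = 0 := by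
  induction n with
  | zero => simp
  | succ n ih =>
    have hc' : ∀ i < n, |c i| ≤ 1 := fun i hi => hc i (by omega)
    rw [sum_range_succ] at h
    -- the top digit outweighs all lower ones together
    have htop : c n = 0 := by
      have hlt := abs_sum_mul_two_pow_lt hc'
      rw [eq_neg_of_add_eq_zero_left h, abs_neg, abs_mul, abs_pow, abs_two] at hlt
      have := abs_lt.mp <| lt_of_mul_lt_mul_right (hlt.trans_eq (one_mul _).symm) (by positivity)
      omega
    rw [htop, zero_mul, add_zero] at h
    intro i hi
    rcases Nat.lt_succ_iff_lt_or_eq.mp hi with hi | rfl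
    · exact ih hc' h i hi
    · exact htop

lemma hasDistinctSubsetSums_signed_two_pow {N : ℕ} (hN : 2 ^ n ≤ N) {ε : ℕ → ℤ}
    (hε : ∀ i < n, ε i = 1 ∨ ε i = -1) {u : ZMod N} (hu : IsUnit u) :
    HasDistinctSubsetSums (fun i => (ε i : ZMod N) * u * 2 ^ i) (range n) := by
  intro I hI J hJ hIJ
  simp only [coe_powerset, Set.mem_preimage, Set.mem_powerset_iff, coe_subset] at hI hJ hIJ
  -- the digits of the difference of the two sums
  set c : ℕ → ℤ := fun i => ε i * ((if i ∈ I then 1 else 0) - (if i ∈ J then 1 else 0))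
  have hc : ∀ i < n, |c i| ≤ 1 := by
    intro i hi
    rcases hε i hi with h | h <;> simp only [c, h] <;> split_ifs <;> norm_num
  have hsum : ((∑ i ∈ range n, c i * 2 ^ i : ℤ) : ZMod N) * u = 0 := by
    have hext : ∀ K ⊆ range n, ∑ i ∈ K, (ε i : ZMod N) * u * 2 ^ i =
        ∑ i ∈ range n, (if i ∈ K then (ε i : ZMod N) * u * 2 ^ i else 0) := by
      intro K hK
      rw [sum_ite_mem, inter_eq_right.mpr hK]
    rw [hext I hI, hext J hJ, ← sub_eq_zero, ← sum_sub_distrib] at hIJ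
    refine Eq.trans ?_ hIJ
    push_cast [c, sum_mul]
    refine sum_congr rfl fun i _ => ?_
    split_ifs <;> ring
  have hzero := eq_zero_of_sum_mul_two_pow_eq_zero hc <| Int.eq_zero_of_abs_lt_dvd
    ((ZMod.intCast_zmod_eq_zero_iff_dvd _ N).mp (hu.mul_left_eq_zero.mp hsum))
    ((abs_sum_mul_two_pow_lt hc).trans_le (by exact_mod_cast hN))
  ext i
  by_cases hi : i < n
  · have := hzero i hi
    rcases hε i hi with h | h <;> simp only [c, h] at this <;> split_ifs at this <;> simp_all
  · exact iff_of_false (fun h => hi (mem_range.mp (hI h))) (fun h => hi (mem_range.mp (hJ h)))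

end SignedBinary

section Orbit

variable {G : Type*} [AddCommGroup G] {W : Set G} {a t : G}

lemma IsSplitBy.mem_add_nsmul_iff (h : IsSplitBy {t}ᶜ W a) {x : G} {k : ℕ}
    (hk : ∀ j ≤ k, 0 < j → x + j • a ≠ t) : x + k • a ∈ W ↔ (x ∈ W ↔ Even k) := by
  induction k with
  | zero => simp
  | succ k ih =>
    set y := x + k • a
    have hstep : y + a ∈ W ↔ y ∉ W := by
      refine ⟨fun hya hy => h.2 y hy hya, fun hy => ?_⟩
      have hne : y + a ≠ t := by
        simpa [y, succ_nsmul, add_assoc] using hk (k + 1) le_rfl k.succ_pos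
      simpa [hy] using (h.1 (y + a)).mp hne
    rw [succ_nsmul, ← add_assoc, hstep, ih fun j hj => hk j (by omega), Nat.even_add_one]
    tauto

lemma IsSplitBy.exists_eq_add_nsmul [Finite G] (hG : Odd (Nat.card G)) (h : IsSplitBy {t}ᶜ W a)
    (x : G) : ∃ k : ℕ, x = t + k • a := by
  by_contra! hx
  -- otherwise membership would alternate all along the orbit of `x`, whose length is odd
  have hm : Odd (addOrderOf a) := hG.of_dvd_nat (addOrderOf_dvd_natCard a)
  have hmem := h.mem_add_nsmul_iff (x := x) (k := addOrderOf a) fun j hj _ hjt => hx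
    (addOrderOf a - j) (by rw [← hjt, add_assoc, ← add_nsmul, Nat.add_sub_cancel' hj,
      addOrderOf_nsmul_eq_zero, add_zero])
  rw [addOrderOf_nsmul_eq_zero, add_zero] at hmem
  exact Nat.not_even_iff_odd.mpr hm (by tauto)

end Orbit

section ZModSplit

variable {N : ℕ} {W : Set (ZMod N)} {a t : ZMod N}

lemma IsSplitBy.isUnit_of_compl_singleton (hN : Odd N) (h : IsSplitBy {t}ᶜ W a) : IsUnit a := by
  have : NeZero N := ⟨hN.pos.ne'⟩
  obtain ⟨k, hk⟩ := h.exists_eq_add_nsmul (by rwa [Nat.card_zmod]) (t + 1)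
  exact IsUnit.of_mul_eq_one_right (k : ZMod N) (by simpa [nsmul_eq_mul] using hk.symm)

lemma IsSplitBy.eq_progression {M : ℕ} (hN : N = 2 * M + 1) (h : IsSplitBy {t}ᶜ W a) :
    W = {x | ∃ k < M, x = t + a + k * (2 * a)} := by
  have : NeZero N := ⟨by omega⟩
  obtain ⟨u, rfl⟩ := h.isUnit_of_compl_singleton (by rw [hN]; exact odd_two_mul_add_one M)
  have hmem : ∀ k < N, t + k * u ∈ W ↔ Odd k := by
    intro k hk
    have hne : ∀ j ≤ k, 0 < j → t + j • (u : ZMod N) ≠ t := by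
      intro j hjk hj hjt
      rw [nsmul_eq_mul, add_eq_left, u.mul_left_eq_zero, ZMod.natCast_eq_zero_iff] at hjt
      exact absurd (Nat.le_of_dvd hj hjt) (by omega)
    have ht : t ∉ W := fun ht => ((h.1 t).mpr (.inl ht)) rfl
    rw [← nsmul_eq_mul, h.mem_add_nsmul_iff hne, ← Nat.not_even_iff_odd]
    tauto
  ext x
  refine ⟨fun hx => ?_, ?_⟩
  · obtain ⟨j, hj, rfl⟩ : ∃ j < N, x = t + j * u := ⟨((x - t) * ↑u⁻¹).val, ZMod.val_lt _, by
      rw [ZMod.natCast_zmod_val, mul_assoc, u.inv_mul, mul_one, add_sub_cancel]⟩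
    obtain ⟨k, rfl⟩ := (hmem j hj).mp hx
    exact ⟨k, by omega, by push_cast; ring⟩
  · rintro ⟨k, hk, rfl⟩
    convert (hmem (2 * k + 1) (by omega)).mpr (odd_two_mul_add_one k) using 1
    push_cast; ring

end ZModSplit

/-- The hypotheses say that `{j < M | p j}` and its shift by `d` partition `{j < M}`. Then `p`
holds exactly on the even-numbered blocks `[q * d, (q + 1) * d)`, and the last block is odd. -/
lemma two_mul_dvd_of_range_split {M d : ℕ} {p : ℕ → Prop}
    (h₁ : ∀ j < M, p j → j + d < M ∧ ¬p (j + d)) (h₂ : ∀ j < M, ¬p j → d ≤ j ∧ p (j - d)) :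
    2 * d ∣ M := by
  rcases Nat.eq_zero_or_pos M with rfl | hM
  · exact dvd_zero _
  rcases Nat.eq_zero_or_pos d with rfl | hd
  · by_cases h0 : p 0
    · exact absurd h0 (by simpa using (h₁ 0 hM h0).2)
    · exact absurd (by simpa using (h₂ 0 hM h0).2) h0
  have hblock : ∀ q r, r < d → d * q + r < M → (p (d * q + r) ↔ Even q) := by
    intro q r hr
    induction q with
    | zero =>
      intro hr'
      simp only [mul_zero, zero_add, Even.zero, iff_true] at hr' ⊢
      exact by_contra fun h => (h₂ r hr' h).1.not_gt hr
    | succ q ih =>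
      intro hq
      rw [show d * (q + 1) + r = d * q + r + d by ring] at hq ⊢
      rw [Nat.even_add_one, ← ih (by omega)]
      refine ⟨fun hp hp' => (h₁ _ (by omega) hp').2 hp, fun hp => by_contra fun hp' => hp ?_⟩
      simpa using (h₂ _ hq hp').2
  obtain ⟨q, r, hr, hqr⟩ : ∃ q r, r < d ∧ M - 1 = d * q + r :=
    ⟨(M - 1) / d, (M - 1) % d, Nat.mod_lt _ hd, (Nat.div_add_mod _ _).symm⟩
  obtain ⟨e, rfl⟩ : Odd q := by
    rw [← Nat.not_even_iff_odd, ← hblock q r hr (by omega), ← hqr]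
    exact fun hp => by have := (h₁ (M - 1) (by omega) hp).1; omega
  rw [show d * (2 * e + 1) = 2 * (d * e) + d by ring] at hqr
  have hprev := hblock (2 * e) (d - 1) (by omega) (by rw [mul_left_comm]; omega)
  rw [mul_left_comm] at hprev
  have hend := (h₁ _ (by omega) (hprev.mpr (even_two_mul e))).1
  exact ⟨e + 1, by rw [show 2 * d * (e + 1) = 2 * (d * e) + 2 * d by ring]; omega⟩

namespace ZMod

variable {N : ℕ}

lemma eq_of_natCast_mul_eq {u : ZMod N} (hu : IsUnit u) {j k : ℕ} (hj : j < N) (hk : k < N)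
    (h : (j : ZMod N) * u = k * u) : j = k := by
  rwa [hu.mul_left_inj, natCast_eq_natCast_iff', Nat.mod_eq_of_lt hj, Nat.mod_eq_of_lt hk] at h

lemma exists_le_half_eq_natCast_or_neg [NeZero N] (c : ZMod N) :
    ∃ d ≤ N / 2, c = d ∨ c = -d := by
  refine ⟨c.valMinAbs.natAbs, c.natAbs_valMinAbs_le, ?_⟩
  rw [natCast_natAbs_valMinAbs]
  split_ifs
  · exact .inl rfl
  · exact .inr (neg_neg c).symm

end ZMod

section Progression

variable {N M : ℕ} {s u : ZMod N} {W : Set (ZMod N)}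

lemma two_mul_dvd_of_isSplitBy_progression (hMN : 2 * M ≤ N) (hu : IsUnit u) {d : ℕ}
    (hd : d ≤ M) (h : IsSplitBy {x | ∃ k < M, x = s + k * u} W (d * u)) : 2 * d ∣ M := by
  refine two_mul_dvd_of_range_split (p := fun j => s + j * u ∈ W)
    (fun j hj hp => ?_) (fun j hj hp => ?_)
  · obtain ⟨k, hk, hjk⟩ := (h.1 _).mpr (.inr (by rwa [add_sub_cancel_right]))
    obtain rfl : j + d = k := ZMod.eq_of_natCast_mul_eq hu (by omega) (by omega) <| by
      push_cast; linear_combination hjk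
    exact ⟨hk, by simpa [add_mul, add_assoc] using h.2 _ hp⟩
  · have hW : s + j * u - d * u ∈ W := ((h.1 _).mp ⟨j, hj, rfl⟩).resolve_left hp
    obtain ⟨k, hk, hjk⟩ := (h.1 _).mpr (.inl hW)
    obtain rfl : j = k + d := ZMod.eq_of_natCast_mul_eq hu (by omega) (by omega) <| by
      push_cast; linear_combination hjk
    exact ⟨le_add_self, by rwa [Nat.add_sub_cancel, ← hjk]⟩

lemma exists_two_mul_dvd_of_isSplitBy_progression {b : ZMod N} (hN : N = 2 * M + 1)
    (hu : IsUnit u) (h : IsSplitBy {x | ∃ k < M, x = s + k * u} W b) :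
    ∃ d : ℕ, 2 * d ∣ M ∧ (b = d * u ∨ b = -(d * u)) := by
  have : NeZero N := ⟨by omega⟩
  have hMN : 2 * M ≤ N := by omega
  obtain ⟨U, rfl⟩ := hu
  obtain ⟨d, hd, hc⟩ := ZMod.exists_le_half_eq_natCast_or_neg (b * ↑U⁻¹ : ZMod N)
  have hdM : d ≤ M := by omega
  have hb : b = b * ↑U⁻¹ * U := by rw [mul_assoc, U.inv_mul, mul_one]
  rcases hc with hc | hc <;> rw [hc] at hb
  · exact ⟨d, two_mul_dvd_of_isSplitBy_progression hMN U.isUnit hdM (hb ▸ h), .inl hb⟩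
  · have h' := h.neg
    rw [hb, neg_mul, neg_neg] at h'
    exact ⟨d, two_mul_dvd_of_isSplitBy_progression hMN U.isUnit hdM h', .inr (by rw [hb]; ring)⟩

end Progression

lemma Finset.exists_coe_eq_compl_singleton {α : Type*} [Fintype α] [DecidableEq α]
    {V : Finset α} (h : V.card + 1 = Fintype.card α) : ∃ t, (V : Set α) = {t}ᶜ := by
  obtain ⟨t, ht⟩ := card_eq_one.mp (by rw [card_compl]; omega : Vᶜ.card = 1)
  exact ⟨t, by rw [← coe_singleton, ← ht, coe_compl, compl_compl]⟩

section Structure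

variable {α : Type*} [DecidableEq α] {N n : ℕ} {f : α → ZMod N} {s : Finset α}

lemma HasDistinctSubsetSums.exists_eq_two_pow_mul (hN : N = 2 ^ n + 1)
    (hf : HasDistinctSubsetSums f s) (hcard : s.card = n) {i : α} (hi : i ∈ s) :
    IsUnit (f i) ∧ ∀ j ∈ s, ∃ m < n, f j = 2 ^ m * f i ∨ f j = -(2 ^ m * f i) := by
  have hn : 0 < n := hcard ▸ card_pos.mpr ⟨i, hi⟩
  have hNM : N = 2 * 2 ^ (n - 1) + 1 := by rw [hN, ← pow_succ', Nat.sub_add_cancel hn]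
  have hodd : Odd N := hNM ▸ odd_two_mul_add_one _
  have : NeZero N := ⟨by omega⟩
  obtain ⟨t, ht⟩ := exists_coe_eq_compl_singleton (V := subsetSums f s) <| by
    rw [hasDistinctSubsetSums_iff_card.mp hf, ZMod.card, hcard, hN]
  have hsplit := hf.isSplitBy hi
  rw [ht] at hsplit
  have hu := hsplit.isUnit_of_compl_singleton hodd
  refine ⟨hu, fun j hj => ?_⟩
  rcases eq_or_ne j i with rfl | hji
  · exact ⟨0, hn, .inl (by simp)⟩
  have hsplit' := (hf.mono (erase_subset i s)).isSplitBy (mem_erase.mpr ⟨hji, hj⟩)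
  rw [hsplit.eq_progression hNM] at hsplit'
  have h2 : IsUnit (2 : ZMod N) := by
    simpa using (ZMod.isUnit_iff_coprime 2 N).mpr (Nat.coprime_two_left.mpr hodd)
  obtain ⟨d, hd, hfj⟩ := exists_two_mul_dvd_of_isSplitBy_progression hNM (h2.mul hu) hsplit'
  obtain ⟨m, hm, hdm⟩ := (Nat.dvd_prime_pow Nat.prime_two).mp hd
  have h2d : (2 : ZMod N) ^ m = 2 * d := by
    exact_mod_cast congrArg (Nat.cast : ℕ → ZMod N) hdm.symm
  refine ⟨m, by omega, ?_⟩
  rw [h2d]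
  rcases hfj with h | h
  · exact .inl (by rw [h]; ring)
  · exact .inr (by rw [h]; ring)

lemma HasDistinctSubsetSums.exists_image_eq (hN : N = 2 ^ n + 1)
    (hf : HasDistinctSubsetSums f s) (hcard : s.card = n) :
    ∃ lam : ZMod N, IsUnit lam ∧ ∃ ε : ℕ → ℤ, (∀ i < n, ε i = 1 ∨ ε i = -1) ∧
      s.image f = (range n).image fun i => (ε i : ZMod N) * lam * 2 ^ i := by
  rcases s.eq_empty_or_nonempty with rfl | ⟨i, hi⟩
  · exact ⟨1, isUnit_one, fun _ => 1, fun _ _ => .inl rfl, by simp [← hcard]⟩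
  obtain ⟨hu, hrep⟩ := hf.exists_eq_two_pow_mul hN hcard hi
  set lam := f i
  have hno_opp : ∀ m < n, 2 ^ m * lam ∈ s.image f → -(2 ^ m * lam) ∉ s.image f := by
    simp only [mem_image]
    rintro m hm ⟨j, hj, hjm⟩ ⟨j', hj', hj'm⟩
    have hne : j ≠ j' := by
      rintro rfl
      have h0 : ((2 ^ (m + 1) : ℕ) : ZMod N) * lam = 0 := by
        push_cast; linear_combination hj'm - hjm
      rw [hu.mul_left_eq_zero, ZMod.natCast_eq_zero_iff] at h0
      have := Nat.le_of_dvd (by positivity) h0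
      have := Nat.pow_le_pow_right two_pos (show m + 1 ≤ n by omega)
      omega
    have hpair : ({j, j'} : Finset α) = ∅ :=
      hf (mem_coe.mpr (mem_powerset.mpr (insert_subset hj (singleton_subset_iff.mpr hj'))))
        (by simp) (by simp [sum_pair hne, hjm, hj'm])
    simp at hpair
  let ε : ℕ → ℤ := fun m => if 2 ^ m * lam ∈ s.image f then 1 else -1
  refine ⟨lam, hu, ε, fun m _ => by unfold ε; split_ifs <;> simp, ?_⟩
  refine eq_of_subset_of_card_le (fun x hx => ?_) ?_
  · obtain ⟨j, hj, rfl⟩ := mem_image.mp hx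
    obtain ⟨m, hm, hjm | hjm⟩ := hrep j hj
    · have : ε m = 1 := if_pos (mem_image.mpr ⟨j, hj, hjm⟩)
      exact mem_image.mpr ⟨m, mem_range.mpr hm, by rw [this, hjm]; push_cast; ring⟩
    · have : ε m = -1 := if_neg fun h => hno_opp m hm h (mem_image.mpr ⟨j, hj, hjm⟩)
      exact mem_image.mpr ⟨m, mem_range.mpr hm, by rw [this, hjm]; push_cast; ring⟩
  · rw [card_image_of_injOn hf.injOn, hcard]
    exact card_image_le.trans (card_range n).le

end Structure

lemma sumsetDistinctMod_iff {N : ℕ} {A : Finset ℕ} :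
    SumsetDistinctMod N A ↔ HasDistinctSubsetSums (fun a : ℕ => (a : ZMod N)) A := by
  simp only [SumsetDistinctMod, HasDistinctSubsetSums, Set.InjOn, coe_powerset, Set.mem_preimage,
    Set.mem_powerset_iff, coe_subset, ← ZMod.natCast_eq_natCast_iff', Nat.cast_sum]

theorem stmt4_general (n : ℕ) (N : ℕ) (hN : N = 2 ^ n + 1)
    (A : Finset ℕ) (hcard : A.card = n) :
    SumsetDistinctMod N A ↔
      ∃ lam : ℤ, Int.gcd lam N = 1 ∧ ∃ ε : ℕ → ℤ, (∀ i < n, ε i = 1 ∨ ε i = -1) ∧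
        A.image (fun a : ℕ => (a : ZMod N)) =
          (Finset.range n).image (fun i => (ε i : ZMod N) * (lam : ZMod N) * 2 ^ i) := by
  have : NeZero N := ⟨hN ▸ Nat.succ_ne_zero _⟩
  rw [sumsetDistinctMod_iff]
  constructor
  · intro hA
    obtain ⟨lam, hlam, ε, hε, himg⟩ := hA.exists_image_eq hN hcard
    refine ⟨lam.val, ?_, ε, hε, by simpa using himg⟩
    rw [Int.gcd_natCast_natCast]
    exact (ZMod.isUnit_iff_coprime _ N).mp (by simpa using hlam)
  · rintro ⟨lam, hlam, ε, hε, himg⟩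
    have hunit : IsUnit (lam : ZMod N) := (ZMod.coe_int_isUnit_iff_isCoprime lam N).mpr
      (Int.isCoprime_iff_gcd_eq_one.mpr (by rwa [Int.gcd_comm]))
    exact (hasDistinctSubsetSums_signed_two_pow (hN ▸ Nat.le_succ _) hε hunit).of_image_eq himg
      (by rw [hcard, card_range])

theorem stmt4 (n : ℕ) (hn : 1 ≤ n) (N : ℕ) (hN : N = 2 ^ n + 1)
    (A : Finset ℕ) (hpos : ∀ a ∈ A, 0 < a) (hcard : A.card = n) :
    SumsetDistinctMod N A ↔
      ∃ lam : ℤ, Int.gcd lam N = 1 ∧ ∃ ε : ℕ → ℤ, (∀ i < n, ε i = 1 ∨ ε i = -1) ∧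
        A.image (fun a : ℕ => (a : ZMod N)) =
          (Finset.range n).image (fun i => (ε i : ZMod N) * (lam : ZMod N) * 2 ^ i) :=
  stmt4_general n N hN A hcard
end

section
/- Let n ≥ 1 and let N = 2^n + 1 or N = 2^n + 3. If A is an n-element set of positive integers that is sumset-distinct modulo N, then every element of A is coprime to N. -/
open Finset

lemma even_card_filter_powerset_sum_modEq {A : Finset ℕ} {a d : ℕ} (ha : a ∈ A) (hda : d ∣ a)
    (r : ℕ) : Even #{B ∈ A.powerset | ∑ x ∈ B, x ≡ r [MOD d]} := by
  have hinsert : ∀ B ∈ (A.erase a).powerset,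
      (∑ x ∈ insert a B, x ≡ r [MOD d]) ↔ ∑ x ∈ B, x ≡ r [MOD d] := by
    intro B hB
    have haB : a ∉ B := fun h => notMem_erase a A (mem_powerset.mp hB h)
    rw [sum_insert haB, Nat.ModEq, Nat.add_mod, Nat.mod_eq_zero_of_dvd hda, zero_add,
      Nat.mod_mod, Nat.ModEq]
  rw [← insert_erase ha, card_filter, sum_powerset_insert (notMem_erase a A),
    sum_congr rfl fun B hB => if_congr (hinsert B hB) rfl rfl]
  exact ⟨_, rfl⟩

lemma add_card_le_of_even_card_filter_modEq {N d : ℕ} {S : Finset ℕ} (hS : S ⊆ range N)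
    (hdN : d ∣ N) (hodd : Odd (N / d))
    (heven : ∀ r, Even #{s ∈ S | s ≡ r [MOD d]}) : d + #S ≤ N := by
  have hd : 0 < d := Nat.pos_of_ne_zero fun h => by simp [h] at hodd
  have hclass : ∀ r, #{k ∈ range N | k ≡ r [MOD d]} = N / d := fun r => by
    rw [← Nat.count_eq_card_filter_range, Nat.count_modEq_card _ hd, Nat.mod_eq_zero_of_dvd hdN]
    simp
  have hmiss : ∀ r, ∃ k ∈ range N \ S, k ≡ r [MOD d] := by
    intro r
    by_contra! hall
    have hsub : {k ∈ range N | k ≡ r [MOD d]} ⊆ {s ∈ S | s ≡ r [MOD d]} := fun k hk => by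
      obtain ⟨hkN, hkr⟩ := mem_filter.mp hk
      by_contra hkS
      exact hall k (mem_sdiff.mpr ⟨hkN, fun h => hkS (mem_filter.mpr ⟨h, hkr⟩)⟩) hkr
    have heq := (card_le_card hsub).antisymm (card_le_card (filter_subset_filter _ hS))
    rw [hclass] at heq
    exact Nat.not_even_iff_odd.mpr hodd (heq ▸ heven r)
  have hsurj : Set.SurjOn (· % d) ↑(range N \ S) ↑(range d) := fun r hr => by
    obtain ⟨k, hk, hkr⟩ := hmiss r
    exact ⟨k, hk, Eq.trans hkr (Nat.mod_eq_of_lt (mem_range.mp hr))⟩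
  have hcover := card_le_card_of_surjOn _ hsurj
  have hSN := card_le_card hS
  rw [card_sdiff_of_subset hS, card_range, card_range] at hcover
  rw [card_range] at hSN
  omega

theorem SumsetDistinctMod.add_two_pow_card_le {N : ℕ} {A : Finset ℕ} (hA : SumsetDistinctMod N A)
    (hN : Odd N) {a d : ℕ} (ha : a ∈ A) (hda : d ∣ a) (hdN : d ∣ N) : d + 2 ^ #A ≤ N := by
  set S := A.powerset.image fun B => (∑ x ∈ B, x) % N
  have hinj : Set.InjOn (fun B => (∑ x ∈ B, x) % N) A.powerset := fun B hB C hC =>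
    hA B (mem_powerset.mp hB) C (mem_powerset.mp hC)
  have hS : S ⊆ range N := fun s hs => by
    obtain ⟨B, -, rfl⟩ := mem_image.mp hs
    exact mem_range.mpr (Nat.mod_lt _ hN.pos)
  have heven : ∀ r, Even #{s ∈ S | s ≡ r [MOD d]} := fun r => by
    rw [filter_image, card_image_of_injOn (hinj.mono (coe_subset.mpr (filter_subset _ _)))]
    have hmod : ∀ B : Finset ℕ, (∑ x ∈ B, x) % N ≡ ∑ x ∈ B, x [MOD d] := fun B =>
      (Nat.mod_modEq _ N).of_dvd hdN
    rw [filter_congr fun B _ => ⟨(hmod B).symm.trans, (hmod B).trans⟩]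
    exact even_card_filter_powerset_sum_modEq ha hda r
  have hodd : Odd (N / d) := (Nat.odd_mul.mp ((Nat.mul_div_cancel' hdN).symm ▸ hN)).2
  simpa [S, card_image_of_injOn hinj] using add_card_le_of_even_card_filter_modEq hS hdN hodd heven

theorem stmt11_general (n : ℕ) (N : ℕ) (hN : N = 2 ^ n + 1 ∨ N = 2 ^ n + 3)
    (A : Finset ℕ) (hcard : A.card = n)
    (hA : SumsetDistinctMod N A) : ∀ a ∈ A, Nat.Coprime a N := by
  intro a ha
  have h2n : Even (2 ^ n) := (Nat.even_pow' (hcard ▸ (card_pos.mpr ⟨a, ha⟩).ne')).mpr even_two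
  have hNodd : Odd N := by
    rcases hN with rfl | rfl
    exacts [h2n.add_one, h2n.add_odd (by decide)]
  have hle := hA.add_two_pow_card_le hNodd ha (Nat.gcd_dvd_left a N) (Nat.gcd_dvd_right a N)
  rw [hcard] at hle
  have hgpos := Nat.gcd_pos_of_pos_right a hNodd.pos
  rcases hN with rfl | rfl
  · unfold Nat.Coprime
    omega
  · have hg3 : a.gcd (2 ^ n + 3) ≠ 3 := fun h3 => by
      have h : 3 ∣ 2 ^ n + 3 := by simpa [h3] using Nat.gcd_dvd_right a (2 ^ n + 3)
      have : 3 ∣ 2 := Nat.prime_three.dvd_of_dvd_pow ((Nat.dvd_add_left (dvd_refl 3)).mp h)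
      omega
    obtain ⟨k, hk⟩ := hNodd.of_dvd_nat (Nat.gcd_dvd_right a _)
    unfold Nat.Coprime
    omega

theorem stmt11 (n : ℕ) (hn : 1 ≤ n) (N : ℕ) (hN : N = 2 ^ n + 1 ∨ N = 2 ^ n + 3)
    (A : Finset ℕ) (hpos : ∀ a ∈ A, 0 < a) (hcard : A.card = n)
    (hA : SumsetDistinctMod N A) : ∀ a ∈ A, Nat.Coprime a N :=
  stmt11_general n N hN A hcard hA
end

section
/- Let t be an odd positive integer, let n ≥ 1, let N = 2^n + t, and let A be an n-element set of positive integers that is sumset-distinct modulo N. Let T be the sum of all elements of A, and let M ⊆ ℤ/Nℤ be the set of residues that are not congruent modulo N to any subset sum of A (so |M| = t). Then: (a) M is invariant under the map s ↦ T - s; and (b) the unique residue x ∈ ℤ/Nℤ with 2x ≡ T (mod N) belongs to M. Consequently, M consists of this singleton x together with (t-1)/2 pairs {y, z} satisfying y + z ≡ 2x (mod N). -/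
theorem stmt12 (t n : ℕ) (htodd : Odd t) (ht : 0 < t) (hn : 1 ≤ n)
    (N : ℕ) [NeZero N] (hN : N = 2 ^ n + t)
    (A : Finset ℕ) (hpos : ∀ a ∈ A, 0 < a) (hcard : A.card = n)
    (hA : SumsetDistinctMod N A)
    (T : ℕ) (hT : T = ∑ a ∈ A, a)
    (M : Finset (ZMod N))
    (hM : M = Finset.univ \ A.powerset.image (fun B => ((∑ x ∈ B, x : ℕ) : ZMod N))) :
    M.card = t ∧ (∀ s ∈ M, (T : ZMod N) - s ∈ M) ∧
      ∀ x : ZMod N, 2 * x = (T : ZMod N) → x ∈ M := by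
  have hinj : Set.InjOn (fun B => ((∑ x ∈ B, x : ℕ) : ZMod N)) A.powerset := by
    intro B hB C hC h
    simp only [Finset.mem_coe, Finset.mem_powerset] at hB hC
    exact hA B hB C hC ((ZMod.natCast_eq_natCast_iff' _ _ _).mp h)
  have hsplit : ∀ B ⊆ A, ((∑ x ∈ A \ B, x : ℕ) : ZMod N) =
      (T : ZMod N) - ((∑ x ∈ B, x : ℕ) : ZMod N) := by
    intro B hB
    have : (∑ x ∈ A \ B, x) + (∑ x ∈ B, x) = T := by rw [hT, Finset.sum_sdiff hB]
    have := congrArg (fun m : ℕ => (m : ZMod N)) this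
    push_cast at this ⊢
    linear_combination this
  have hScard : (A.powerset.image (fun B => ((∑ x ∈ B, x : ℕ) : ZMod N))).card = 2 ^ n := by
    rw [Finset.card_image_of_injOn hinj, Finset.card_powerset, hcard]
  have h2n : 2 ^ n ≤ N := by omega
  have hMcard : M.card = t := by
    rw [hM, Finset.card_sdiff_of_subset (Finset.subset_univ _), Finset.card_univ, ZMod.card, hScard]
    omega
  refine ⟨hMcard, ?_, ?_⟩
  · intro s hs
    rw [hM, Finset.mem_sdiff] at hs ⊢
    refine ⟨Finset.mem_univ _, fun hmem => hs.2 ?_⟩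
    simp only [Finset.mem_image, Finset.mem_powerset] at hmem ⊢
    obtain ⟨B, hB, hsum⟩ := hmem
    refine ⟨A \ B, Finset.sdiff_subset, ?_⟩
    rw [hsplit B hB, hsum]
    ring
  · intro x hx
    rw [hM, Finset.mem_sdiff]
    refine ⟨Finset.mem_univ _, fun hmem => ?_⟩
    simp only [Finset.mem_image, Finset.mem_powerset] at hmem
    obtain ⟨B, hB, hsum⟩ := hmem
    have hEq : ((∑ y ∈ A \ B, y : ℕ) : ZMod N) = ((∑ y ∈ B, y : ℕ) : ZMod N) := by
      rw [hsplit B hB, hsum]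
      linear_combination -hx
    have hBeq : A \ B = B := hinj
      (Finset.mem_coe.mpr (Finset.mem_powerset.mpr Finset.sdiff_subset))
      (Finset.mem_coe.mpr (Finset.mem_powerset.mpr hB)) hEq
    have hBempty : B = ∅ := by
      have hd : Disjoint (A \ B) B := Finset.sdiff_disjoint
      rw [hBeq] at hd
      simpa using hd
    rw [hBempty, Finset.sdiff_empty] at hBeq
    rw [hBeq] at hcard
    simp at hcard
    omega
end

section
/- Let n ≥ 1, let N = 2^n + 3, and let A be an n-element set of positive integers that is sumset-distinct modulo N. Let x, y, z ∈ ℤ/Nℤ be the three residues not congruent to any subset sum of A, labelled so that y + z ≡ 2x (mod N). Then x - y is a unit in ℤ/Nℤ; that is, the difference x - y is coprime to N. -/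
lemma pow_mod_eq {F : Type*} [Monoid F] {t : F} {M : ℕ} (h : t ^ M = 1) (m : ℕ) :
    t ^ m = t ^ (m % M) := by
  conv_lhs => rw [← Nat.div_add_mod m M, pow_add, pow_mul, h, one_pow, one_mul]

lemma geom_zero' {F : Type*} [Field F] {t : F} {M : ℕ} (h : t ^ M = 1) (ht : t ≠ 1) :
    ∑ k ∈ Finset.range M, t ^ k = 0 := by
  rw [geom_sum_eq ht, h, sub_self, zero_div]

-- L3
lemma prod_one_add_pow {F : Type*} [Field F] {p : ℕ} [hp : Fact p.Prime] (hodd : p ≠ 2)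
    {v : F} (hv : orderOf v = p) :
    ∏ u : (ZMod p)ˣ, (1 + v ^ ((u : ZMod p)).val) = 1 := by
  have hvp : v ^ p = 1 := by rw [← hv]; exact pow_orderOf_eq_one v
  have hne : ∀ u : (ZMod p)ˣ, v ^ ((u : ZMod p)).val ≠ 1 := by
    intro u h
    have hd : orderOf v ∣ ((u : ZMod p)).val := orderOf_dvd_of_pow_eq_one h
    rw [hv] at hd
    have h0 : ((u : ZMod p)).val ≠ 0 := by
      simpa [ZMod.val_eq_zero] using u.ne_zero
    have := Nat.le_of_dvd (Nat.pos_of_ne_zero h0) hd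
    have hlt := ZMod.val_lt (u : ZMod p)
    omega
  have two_ne : (2 : ZMod p) ≠ 0 := by
    have : ((2 : ℕ) : ZMod p) ≠ 0 := by
      rw [Ne, ZMod.natCast_eq_zero_iff]
      intro h
      have := Nat.le_of_dvd (by norm_num) h
      have := hp.out.two_le
      omega
    simpa using this
  set W : ZMod p → F := fun a => v ^ a.val with hW
  have hWsq : ∀ a : ZMod p, W (2 * a) = (W a) * (W a) := by
    intro a
    have h1 : (2 * a : ZMod p) = ((2 * a.val : ℕ) : ZMod p) := by
      push_cast [ZMod.natCast_val, ZMod.cast_id]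
      ring
    rw [hW]
    simp only [h1, ZMod.val_natCast]
    rw [← pow_mod_eq hvp, two_mul, pow_add]
  -- the doubling unit
  have twou : IsUnit (2 : ZMod p) := isUnit_iff_ne_zero.mpr two_ne
  obtain ⟨tu, htu⟩ := twou
  set D : F := ∏ u : (ZMod p)ˣ, (1 - W (u : ZMod p)) with hD
  have hDne : D ≠ 0 := by
    rw [hD]
    apply Finset.prod_ne_zero_iff.mpr
    intro u _
    exact sub_ne_zero.mpr (Ne.symm (hne u))
  have hre : ∏ u : (ZMod p)ˣ, (1 - W ((tu * u : (ZMod p)ˣ) : ZMod p)) = D := by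
    rw [hD]
    exact Equiv.prod_comp (Equiv.mulLeft tu) (fun u => (1 - W (u : ZMod p)))
  have key : (∏ u : (ZMod p)ˣ, (1 + W (u : ZMod p))) * D = D := by
    conv_rhs => rw [← hre]
    rw [hD, ← Finset.prod_mul_distrib]
    apply Finset.prod_congr rfl
    intro u _
    have : ((tu * u : (ZMod p)ˣ) : ZMod p) = 2 * (u : ZMod p) := by
      rw [Units.val_mul, htu]
    rw [this, hWsq]
    ring
  have := mul_right_cancel₀ hDne (key.trans (one_mul D).symm)
  simpa [hW] using this


theorem stmt13 (n : ℕ) (hn : 1 ≤ n) (N : ℕ) [NeZero N] (hN : N = 2 ^ n + 3)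
    (A : Finset ℕ) (hpos : ∀ a ∈ A, 0 < a) (hcard : A.card = n)
    (hA : SumsetDistinctMod N A)
    (x y z : ZMod N) (hxy : x ≠ y) (hyz : y ≠ z) (hxz : x ≠ z)
    (hmiss : ({x, y, z} : Finset (ZMod N)) =
      Finset.univ \ A.powerset.image (fun B => ((∑ i ∈ B, i : ℕ) : ZMod N)))
    (hap : y + z = 2 * x) :
    IsUnit (x - y) := by
  by_contra hunit
  -- extract a common odd prime factor p of (x-y).val and N
  have hNodd : N % 2 = 1 := by
    rw [hN]
    have : 2 ^ n % 2 = 0 := by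
      have : (2:ℕ) ∣ 2 ^ n := dvd_pow_self 2 (by omega)
      omega
    omega
  have hcop : ¬ Nat.Coprime ((x - y).val) N := by
    intro h
    apply hunit
    have := (ZMod.isUnit_iff_coprime ((x - y).val) N).mpr h
    rwa [ZMod.natCast_val, ZMod.cast_id] at this
  set g := Nat.gcd ((x - y).val) N with hg
  have hg1 : g ≠ 1 := hcop
  have hgN : g ∣ N := Nat.gcd_dvd_right _ _
  have hg0 : g ≠ 0 := by
    intro h
    exact NeZero.ne N (by simpa [h] using (Nat.eq_zero_of_gcd_eq_zero_right h))
  set p := g.minFac with hpdef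
  have hp : p.Prime := Nat.minFac_prime hg1
  have hpg : p ∣ g := Nat.minFac_dvd g
  have hpN : p ∣ N := hpg.trans hgN
  have hpxy : p ∣ (x - y).val := hpg.trans (Nat.gcd_dvd_left _ _)
  have hp2 : p ≠ 2 := by
    intro h
    rw [h] at hpN
    omega
  have hp3 : 3 ≤ p := by have := hp.two_le; omega
  haveI : Fact p.Prime := ⟨hp⟩
  classical
  set k := (A.filter (fun i => p ∣ i)).card with hk
  obtain ⟨q, hq, hqgt, hqmod⟩ :=
    Nat.exists_prime_gt_modEq_one (k := p) (3 ^ (p - 1) + 2 ^ ((p - 1) * k)) (by omega)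
  haveI : Fact q.Prime := ⟨hq⟩
  have hpq : p ∣ q - 1 := (Nat.modEq_iff_dvd' (by have := hq.two_le; omega)).mp hqmod.symm
  obtain ⟨gu, hgu⟩ := exists_prime_orderOf_dvd_card (G := (ZMod q)ˣ) p
    (by rw [ZMod.card_units]; exact hpq)
  set v : ZMod q := (gu : ZMod q) with hvdef
  have hv : orderOf v = p := by rw [hvdef, orderOf_units, hgu]
  have hvp : v ^ p = 1 := by rw [← hv]; exact pow_orderOf_eq_one v
  obtain ⟨M, hM⟩ := hpN
  -- Key identity
  have key : ∀ t : ZMod q, t ^ p = 1 → t ≠ 1 →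
      ∏ i ∈ A, (1 + t ^ i) = -3 * t ^ x.val := by
    intro t htp ht1
    have htN : t ^ N = 1 := by rw [hM, pow_mul, htp, one_pow]
    have hadd : ∀ a b : ZMod N, t ^ ((a + b).val) = t ^ a.val * t ^ b.val := by
      intro a b
      rw [ZMod.val_add, ← pow_mod_eq htN, pow_add]
    have hxy1 : t ^ ((x - y).val) = 1 := by
      obtain ⟨c', hc'⟩ := hpxy
      rw [hc', pow_mul, htp, one_pow]
    have hyx : t ^ y.val = t ^ x.val := by
      have hx : x = y + (x - y) := by ring
      rw [show t ^ x.val = t ^ y.val * t ^ ((x - y).val) by rw [← hadd, ← hx], hxy1, mul_one]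
    have hzx : t ^ z.val = t ^ x.val := by
      have hz : z = x + (x - y) := by linear_combination hap
      rw [hz, hadd, hxy1, mul_one]
    have hexp : ∏ i ∈ A, (1 + t ^ i)
        = ∑ B ∈ A.powerset, t ^ (((∑ i ∈ B, i : ℕ) : ZMod N)).val := by
      have h1 := Finset.prod_add (fun i => t ^ i) (fun _ => (1 : ZMod q)) A
      simp only [Finset.prod_const_one, mul_one] at h1
      rw [show (∏ i ∈ A, (1 + t ^ i)) = ∏ i ∈ A, (t ^ i + 1) by
        exact Finset.prod_congr rfl fun i _ => add_comm _ _, h1]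
      apply Finset.sum_congr rfl
      intro B _
      rw [Finset.prod_pow_eq_pow_sum, ZMod.val_natCast, ← pow_mod_eq htN]
    have hinj : ∀ B ∈ A.powerset, ∀ C ∈ A.powerset,
        ((∑ i ∈ B, i : ℕ) : ZMod N) = ((∑ i ∈ C, i : ℕ) : ZMod N) → B = C := by
      intro B hB C hC h
      exact hA B (Finset.mem_powerset.mp hB) C (Finset.mem_powerset.mp hC)
        ((ZMod.natCast_eq_natCast_iff' _ _ _).mp h)
    have himg : ∑ B ∈ A.powerset, t ^ (((∑ i ∈ B, i : ℕ) : ZMod N)).val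
        = ∑ s ∈ A.powerset.image (fun B => ((∑ i ∈ B, i : ℕ) : ZMod N)), t ^ s.val :=
      (Finset.sum_image (f := fun s : ZMod N => t ^ s.val) hinj).symm
    have hset : A.powerset.image (fun B => ((∑ i ∈ B, i : ℕ) : ZMod N))
        = Finset.univ \ {x, y, z} := by
      conv_rhs => rw [hmiss]
      rw [Finset.sdiff_sdiff_eq_self (Finset.subset_univ _)]
    have htot : ∑ s : ZMod N, t ^ s.val = 0 := by
      rw [← geom_zero' htN ht1]
      apply Finset.sum_nbij (i := ZMod.val)
      · intro a _
        exact Finset.mem_range.mpr (ZMod.val_lt a)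
      · intro a _ b _ h
        exact ZMod.val_injective N h
      · intro b hb
        exact ⟨(b : ZMod N), Finset.mem_coe.mpr (Finset.mem_univ _),
          ZMod.val_cast_of_lt (Finset.mem_range.mp hb)⟩
      · intro a _
        rfl
    have hsplit : ∑ s ∈ (Finset.univ \ {x, y, z} : Finset (ZMod N)), t ^ s.val
        = (∑ s : ZMod N, t ^ s.val) - ∑ s ∈ ({x, y, z} : Finset (ZMod N)), t ^ s.val :=
      Finset.sum_sdiff_eq_sub (Finset.subset_univ _)
    have hxyz : ∑ s ∈ ({x, y, z} : Finset (ZMod N)), t ^ s.val = 3 * t ^ x.val := by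
      rw [Finset.sum_insert (by simp [hxy, hxz]), Finset.sum_insert (by simp [hyz]),
        Finset.sum_singleton, hyx, hzx]
      ring
    rw [hexp, himg, hset, hsplit, htot, hxyz]
    ring
  have ha_ne : ∀ u : (ZMod p)ˣ, v ^ ((u : ZMod p)).val ≠ 1 := by
    intro u h
    have hd : orderOf v ∣ ((u : ZMod p)).val := orderOf_dvd_of_pow_eq_one h
    rw [hv] at hd
    have h0 : ((u : ZMod p)).val ≠ 0 := by simpa [ZMod.val_eq_zero] using u.ne_zero
    have := Nat.le_of_dvd (Nat.pos_of_ne_zero h0) hd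
    have := ZMod.val_lt (u : ZMod p)
    omega
  set P := ∏ u : (ZMod p)ˣ, ∏ i ∈ A, (1 + (v ^ ((u : ZMod p)).val) ^ i) with hPdef
  have hcardu : Fintype.card (ZMod p)ˣ = p - 1 := ZMod.card_units p
  have two_ne : (2 : ZMod p) ≠ 0 := by
    have h22 : ((2 : ℕ) : ZMod p) ≠ 0 := by
      rw [Ne, ZMod.natCast_eq_zero_iff]
      intro h
      have := Nat.le_of_dvd (by norm_num) h
      omega
    simpa using h22
  have hsum0 : ∑ u : (ZMod p)ˣ, ((u : ZMod p)) = 0 := by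
    set S := ∑ u : (ZMod p)ˣ, ((u : ZMod p)) with hS
    have h2 := Equiv.sum_comp (Equiv.mulLeft (-1 : (ZMod p)ˣ))
      (fun u : (ZMod p)ˣ => ((u : ZMod p)))
    simp only [Equiv.coe_mulLeft, Units.val_mul, Units.val_neg, Units.val_one, neg_mul,
      one_mul, Finset.sum_neg_distrib] at h2
    -- h2 : -S = S
    have h3 : (2 : ZMod p) * S = 0 := by
      rw [two_mul, hS]
      nth_rewrite 1 [← h2]
      ring
    exact (mul_eq_zero.mp h3).resolve_left two_ne
  have hP1 : P = (3 : ZMod q) ^ (p - 1) := by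
    rw [hPdef]
    have hstep : ∀ u : (ZMod p)ˣ, ∏ i ∈ A, (1 + (v ^ ((u : ZMod p)).val) ^ i)
        = -3 * v ^ (((u : ZMod p)).val * x.val) := by
      intro u
      rw [key _ (by rw [← pow_mul, mul_comm, pow_mul, hvp, one_pow]) (ha_ne u), ← pow_mul]
    rw [Finset.prod_congr rfl fun u _ => hstep u, Finset.prod_mul_distrib, Finset.prod_const,
      Finset.card_univ, hcardu, Finset.prod_pow_eq_pow_sum]
    have hdvd : p ∣ ∑ u : (ZMod p)ˣ, ((u : ZMod p)).val * x.val := by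
      have hcast : ((∑ u : (ZMod p)ˣ, ((u : ZMod p)).val * x.val : ℕ) : ZMod p) = 0 := by
        push_cast
        simp only [ZMod.natCast_val, ZMod.cast_id]
        rw [← Finset.sum_mul, hsum0, zero_mul]
      exact (ZMod.natCast_eq_zero_iff _ _).mp hcast
    obtain ⟨c2, hc2⟩ := hdvd
    rw [hc2, pow_mul, hvp, one_pow, mul_one]
    have hoddp : Odd p := hp.odd_of_ne_two hp2
    have heven : Even (p - 1) := Nat.Odd.sub_odd hoddp odd_one
    rw [heven.neg_pow]
  have hP2 : P = (2 : ZMod q) ^ ((p - 1) * k) := by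
    rw [hPdef, Finset.prod_comm]
    have hterm : ∀ i ∈ A, (∏ u : (ZMod p)ˣ, (1 + (v ^ ((u : ZMod p)).val) ^ i))
        = if p ∣ i then (2 : ZMod q) ^ (p - 1) else 1 := by
      intro i _
      have hrw : ∀ u : (ZMod p)ˣ, (v ^ ((u : ZMod p)).val) ^ i = (v ^ i) ^ ((u : ZMod p)).val := by
        intro u; rw [← pow_mul, ← pow_mul, mul_comm]
      by_cases hdi : p ∣ i
      · obtain ⟨c3, rfl⟩ := hdi
        simp only [hrw, pow_mul, hvp, one_pow]
        rw [if_pos ⟨c3, rfl⟩, Finset.prod_const, Finset.card_univ, hcardu]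
        norm_num
      · have hw1 : (v ^ i) ≠ 1 := by
          intro h
          have hdd := orderOf_dvd_of_pow_eq_one h
          rw [hv] at hdd; exact hdi hdd
        have hwp : orderOf (v ^ i) = p := by
          have hd : orderOf (v ^ i) ∣ p := orderOf_dvd_of_pow_eq_one
            (by rw [← pow_mul, mul_comm, pow_mul, hvp, one_pow])
          rcases (Nat.Prime.eq_one_or_self_of_dvd hp _ hd) with h1 | h1
          · exact absurd (orderOf_eq_one_iff.mp h1) hw1
          · exact h1
        rw [if_neg hdi]
        simp only [hrw]
        exact prod_one_add_pow hp2 hwp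
    rw [Finset.prod_congr rfl hterm, Finset.prod_ite, Finset.prod_const, Finset.prod_const_one,
      mul_one, ← pow_mul, hk]
  have hqcast : ((3 ^ (p - 1) : ℕ) : ZMod q) = ((2 ^ ((p - 1) * k) : ℕ) : ZMod q) := by
    push_cast
    rw [← hP1, hP2]
  have heq : 3 ^ (p - 1) = 2 ^ ((p - 1) * k) := by
    have hmod := (ZMod.natCast_eq_natCast_iff' _ _ _).mp hqcast
    rwa [Nat.mod_eq_of_lt (lt_of_le_of_lt (Nat.le_add_right _ _) hqgt),
      Nat.mod_eq_of_lt (lt_of_le_of_lt (Nat.le_add_left _ _) hqgt)] at hmod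
  have hodd3 : 3 ^ (p - 1) % 2 = 1 := by
    rw [Nat.pow_mod]
    norm_num
  rcases Nat.eq_zero_or_pos ((p - 1) * k) with h0 | hpos'
  · rw [h0, pow_zero] at heq
    have h1 : 1 < 3 ^ (p - 1) := Nat.one_lt_pow (by omega) (by norm_num)
    omega
  · have h2 : 2 ∣ 2 ^ ((p - 1) * k) := dvd_pow_self 2 (by omega)
    omega
end

section
/- Let n ≥ 2, let N = 2^n + 2, and let A be an n-element set of positive integers that is sumset-distinct modulo N and contains no element congruent to N/2 modulo N. Let s_1 and s_2 be the two residues in ℤ/Nℤ that are not congruent to any subset sum of A. Then s_1 - s_2 ≢ N/2 (mod N). -/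
theorem stmt14 (n : ℕ) (hn : 2 ≤ n) (N : ℕ) [NeZero N] (hN : N = 2 ^ n + 2)
    (A : Finset ℕ) (hpos : ∀ a ∈ A, 0 < a) (hcard : A.card = n)
    (hA : SumsetDistinctMod N A)
    (hhalf : ∀ a ∈ A, ((a : ZMod N)) ≠ ((N / 2 : ℕ) : ZMod N))
    (s₁ s₂ : ZMod N) (hne : s₁ ≠ s₂)
    (hmiss : ({s₁, s₂} : Finset (ZMod N)) =
      Finset.univ \ A.powerset.image (fun B => ((∑ x ∈ B, x : ℕ) : ZMod N))) :
    s₁ - s₂ ≠ ((N / 2 : ℕ) : ZMod N) := by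
  intro hcontra
  classical
  have h2n : 4 ≤ 2 ^ n := by
    calc (4 : ℕ) = 2 ^ 2 := by norm_num
    _ ≤ 2 ^ n := Nat.pow_le_pow_right (by norm_num) hn
  have h2N : 2 ∣ N := by
    rw [hN]; exact Nat.dvd_add (dvd_pow_self 2 (by omega)) dvd_rfl
  have hNe : N / 2 + N / 2 = N := by omega
  have h1N : 1 < N := by omega
  have hhalfpos : 0 < N / 2 := by omega
  have hhalflt : N / 2 < N := Nat.div_lt_self (by omega) (by norm_num)
  set ζ : ℂ := Complex.exp (2 * Real.pi * Complex.I / N) with hζdef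
  have hζ : IsPrimitiveRoot ζ N := Complex.isPrimitiveRoot_exp N (NeZero.ne N)
  have hζN : ζ ^ N = 1 := hζ.pow_eq_one
  have hζhalf : ζ ^ (N / 2) = -1 := by
    have hsq : ζ ^ (N / 2) * ζ ^ (N / 2) = 1 := by
      rw [← pow_add, hNe, hζN]
    rcases mul_self_eq_one_iff.mp hsq with h | h
    · exfalso
      have hd := (hζ.pow_eq_one_iff_dvd _).mp h
      have := Nat.le_of_dvd hhalfpos hd
      omega
    · exact h
  set F : ZMod N → ℂ := fun x => ζ ^ x.val with hF
  have key : ∀ k : ℕ, ζ ^ k = F ((k : ℕ) : ZMod N) := by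
    intro k
    rw [hF]
    simp only
    rw [ZMod.val_natCast, ← pow_eq_pow_mod k hζN]
  set g : Finset ℕ → ZMod N := fun B => ((∑ x ∈ B, x : ℕ) : ZMod N) with hg
  -- product-sum identity
  have hprod : ∏ a ∈ A, (1 + ζ ^ a) = ∑ B ∈ A.powerset, F (g B) := by
    calc ∏ a ∈ A, (1 + ζ ^ a) = ∏ a ∈ A, ((fun a : ℕ => ζ ^ a) a + (fun _ : ℕ => (1:ℂ)) a) := by
            simp [add_comm]
    _ = ∑ t ∈ A.powerset, (∏ i ∈ t, ζ ^ i) * ∏ _i ∈ A \ t, (1:ℂ) :=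
            Finset.prod_add _ _ A
    _ = ∑ B ∈ A.powerset, F (g B) := by
            refine Finset.sum_congr rfl fun t ht => ?_
            rw [Finset.prod_const_one, mul_one, Finset.prod_pow_eq_pow_sum, key, hg]
  -- injectivity of g on powerset
  have hinj : ∀ B ∈ A.powerset, ∀ C ∈ A.powerset, g B = g C → B = C := by
    intro B hB C hC hgBC
    have := (ZMod.natCast_eq_natCast_iff _ _ _).mp hgBC
    exact hA B (Finset.mem_powerset.mp hB) C (Finset.mem_powerset.mp hC) this
  have himg : ∑ B ∈ A.powerset, F (g B) = ∑ x ∈ A.powerset.image g, F x :=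
    (Finset.sum_image hinj).symm
  -- sum over all of ZMod N is zero
  have huniv : ∑ x : ZMod N, F x = 0 := by
    have heq : ∑ x : ZMod N, F x = ∑ i ∈ Finset.range N, ζ ^ i := by
      refine Finset.sum_nbij' (fun x : ZMod N => x.val) (fun i : ℕ => (i : ZMod N))
        (fun a _ => Finset.mem_range.mpr (ZMod.val_lt a))
        (fun a _ => Finset.mem_univ _)
        (fun a _ => by simp [ZMod.natCast_val, ZMod.cast_id])
        (fun a ha => ZMod.val_cast_of_lt (Finset.mem_range.mp ha))
        (fun a _ => rfl)
    rw [heq]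
    exact hζ.geom_sum_eq_zero h1N
  -- image is univ minus the two missing residues
  have hmiss' : A.powerset.image g = Finset.univ \ ({s₁, s₂} : Finset (ZMod N)) := by
    have hsub : A.powerset.image g ⊆ Finset.univ := Finset.subset_univ _
    rw [hmiss, Finset.sdiff_sdiff_self_left, Finset.inter_eq_right.mpr hsub]
  -- F s₁ + F s₂ = 0
  have hFs : F s₁ + F s₂ = 0 := by
    have hs1 : s₁ = s₂ + ((N / 2 : ℕ) : ZMod N) := by
      rw [← hcontra]; ring
    rw [hF]
    simp only
    rw [hs1, ZMod.val_add, ← pow_eq_pow_mod _ hζN, pow_add, ZMod.val_natCast,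
      Nat.mod_eq_of_lt hhalflt, hζhalf]
    ring
  -- conclude product is zero
  have hzero : ∏ a ∈ A, (1 + ζ ^ a) = 0 := by
    rw [hprod, himg, hmiss', Finset.sum_sdiff_eq_sub (Finset.subset_univ _), huniv,
      Finset.sum_pair hne, hFs]
    ring
  obtain ⟨a, haA, ha⟩ := Finset.prod_eq_zero_iff.mp hzero
  have hζa : ζ ^ a = -1 := by linear_combination ha
  have hdvd : N ∣ a + N / 2 := by
    refine (hζ.pow_eq_one_iff_dvd _).mp ?_
    rw [pow_add, hζa, hζhalf]
    ring
  refine hhalf a haA ?_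
  have h0 : ((a + N / 2 : ℕ) : ZMod N) = 0 :=
    (ZMod.natCast_eq_zero_iff _ _).mpr hdvd
  push_cast at h0
  have hNN : ((N / 2 : ℕ) : ZMod N) + ((N / 2 : ℕ) : ZMod N) = 0 := by
    rw [← Nat.cast_add, hNe, ZMod.natCast_self]
  linear_combination h0 - hNN
end

section
/- If A is an n-element set of positive integers that is sumset-distinct modulo 2^n (with n ≥ 1), then the sum of all elements of A is odd. -/
lemma double_powerset_sum (A : Finset ℕ) :
    2 * ∑ B ∈ A.powerset, ∑ x ∈ B, x = 2 ^ A.card * ∑ x ∈ A, x := by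
  induction A using Finset.induction with
  | empty => simp
  | @insert a s ha ih =>
    have h₁ : ∑ t ∈ s.powerset, ∑ x ∈ insert a t, x
        = 2 ^ s.card * a + ∑ t ∈ s.powerset, ∑ x ∈ t, x := by
      rw [Finset.sum_congr rfl
        (fun t ht => Finset.sum_insert (fun h => ha (Finset.mem_powerset.mp ht h))),
        Finset.sum_add_distrib, Finset.sum_const, Finset.card_powerset, smul_eq_mul]
    rw [Finset.sum_powerset_insert ha, h₁, Finset.sum_insert ha,
      Finset.card_insert_of_notMem ha, pow_succ]
    calc 2 * (∑ t ∈ s.powerset, ∑ x ∈ t, x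
          + (2 ^ s.card * a + ∑ t ∈ s.powerset, ∑ x ∈ t, x))
        = 2 ^ s.card * 2 * a + 2 * (2 * ∑ t ∈ s.powerset, ∑ x ∈ t, x) := by ring
      _ = 2 ^ s.card * 2 * a + 2 * (2 ^ s.card * ∑ x ∈ s, x) := by rw [ih]
      _ = 2 ^ s.card * 2 * (a + ∑ x ∈ s, x) := by ring

theorem stmt16 (n : ℕ) (hn : 1 ≤ n) (A : Finset ℕ) (hpos : ∀ a ∈ A, 0 < a)
    (hcard : A.card = n) (hA : SumsetDistinctMod (2 ^ n) A) :
    Odd (∑ a ∈ A, a) := by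
  set N := 2 ^ n with hN
  haveI : NeZero N := ⟨pow_ne_zero n two_ne_zero⟩
  set g : Finset ℕ → ZMod N := fun B => ((∑ x ∈ B, x : ℕ) : ZMod N) with hg
  have hinj : ∀ B ∈ A.powerset, ∀ C ∈ A.powerset, g B = g C → B = C := by
    intro B hB C hC h
    exact hA B (Finset.mem_powerset.mp hB) C (Finset.mem_powerset.mp hC)
      ((ZMod.natCast_eq_natCast_iff' _ _ _).mp h)
  have himg : A.powerset.image g = Finset.univ := by
    apply Finset.eq_univ_of_card
    rw [Finset.card_image_of_injOn (fun B hB C hC h => hinj B hB C hC h),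
      Finset.card_powerset, hcard, ZMod.card]
  have key : ∑ B ∈ A.powerset, g B = ∑ y : ZMod N, y := by
    rw [← himg, Finset.sum_image hinj]
  have huniv : ∑ y : ZMod N, y = ∑ i ∈ Finset.range N, ((i : ℕ) : ZMod N) := by
    refine Finset.sum_nbij' (i := ZMod.val) (j := fun i => (i : ZMod N)) ?_ ?_ ?_ ?_ ?_
    · intro a _; exact Finset.mem_range.mpr (ZMod.val_lt a)
    · intro a _; exact Finset.mem_univ _
    · intro a _; exact ZMod.natCast_zmod_val a
    · intro a ha; exact ZMod.val_cast_of_lt (Finset.mem_range.mp ha)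
    · intro a _; exact (ZMod.natCast_zmod_val a).symm
  have hcast : ((∑ B ∈ A.powerset, ∑ x ∈ B, x : ℕ) : ZMod N)
      = ((∑ i ∈ Finset.range N, i : ℕ) : ZMod N) := by
    rw [Nat.cast_sum, Nat.cast_sum]
    exact key.trans huniv
  have hPQ : (∑ B ∈ A.powerset, ∑ x ∈ B, x) ≡ (∑ i ∈ Finset.range N, i) [MOD N] :=
    (ZMod.natCast_eq_natCast_iff _ _ _).mp hcast
  have h2 : 2 * (∑ B ∈ A.powerset, ∑ x ∈ B, x) ≡ 2 * (∑ i ∈ Finset.range N, i) [MOD 2 * N] :=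
    hPQ.mul_left' _
  have h3 : 2 * ∑ i ∈ Finset.range N, i = N * (N - 1) := by
    rw [mul_comm]; exact Finset.sum_range_id_mul_two N
  rw [double_powerset_sum, hcard, ← hN, h3, mul_comm 2 N] at h2
  have h4 : (∑ a ∈ A, a) ≡ (N - 1) [MOD 2] :=
    Nat.ModEq.mul_left_cancel' (NeZero.ne N) h2
  have hdvd : 2 ∣ N := dvd_pow_self 2 (by omega)
  have hne : N ≠ 0 := NeZero.ne N
  clear_value N
  clear hA g hg hinj himg key huniv hcast hPQ h2 h3
  rw [Nat.ModEq] at h4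
  rw [Nat.odd_iff]
  omega
end

section
/- Let r ≥ 1 be an integer, let t = 2r + 3, let n ≥ 1, and let p_0, p_1, …, p_{n-1} be nonnegative integers satisfying p_{i+1} ≥ p_0 + p_1 + … + p_i for every 0 ≤ i ≤ n-2, and p_{n-1} ≤ r. Then the n-element set A = { 2^i + p_i : 0 ≤ i ≤ n-1 } is sumset-distinct modulo N = 2^n + t. -/
theorem stmt18 (r : ℕ) (hr : 1 ≤ r) (t : ℕ) (ht : t = 2 * r + 3) (n : ℕ) (hn : 1 ≤ n)
    (p : ℕ → ℕ)
    (hp : ∀ i, i + 2 ≤ n → (∑ j ∈ Finset.range (i + 1), p j) ≤ p (i + 1))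
    (hpn : p (n - 1) ≤ r) :
    ((Finset.range n).image (fun i => 2 ^ i + p i)).card = n ∧
      SumsetDistinctMod (2 ^ n + t) ((Finset.range n).image (fun i => 2 ^ i + p i)) := by
  set f : ℕ → ℕ := fun i => 2 ^ i + p i with hf
  -- partial sums of p are bounded by the next p
  have hpsum : ∀ k, k < n → (∑ j ∈ Finset.range k, p j) ≤ p k := by
    intro k hk
    rcases Nat.eq_zero_or_pos k with h0 | h1
    · subst h0; simp
    · have h := hp (k - 1) (by omega)
      rwa [Nat.sub_add_cancel h1] at h
  have hgeom : ∀ k, (∑ i ∈ Finset.range k, (2:ℕ) ^ i) + 1 = 2 ^ k := by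
    intro k
    induction k with
    | zero => simp
    | succ m ih => rw [Finset.sum_range_succ]; rw [pow_succ]; omega
  -- superincreasing property
  have hsuper : ∀ k, k < n → (∑ i ∈ Finset.range k, f i) < f k := by
    intro k hk
    have h1 : (∑ i ∈ Finset.range k, f i)
        = (∑ i ∈ Finset.range k, (2:ℕ) ^ i) + ∑ i ∈ Finset.range k, p i := by
      rw [← Finset.sum_add_distrib]
    have h2 := hgeom k
    have h3 := hpsum k hk
    have h4 : f k = 2 ^ k + p k := rfl
    rw [h1]
    omega
  -- injectivity on range n
  have haux : ∀ i j, i < j → j < n → f i ≠ f j := by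
    intro i j hlt hj
    have h1 : f i ≤ ∑ x ∈ Finset.range j, f x :=
      Finset.single_le_sum (fun x _ => Nat.zero_le _) (Finset.mem_range.mpr hlt)
    have h2 := hsuper j hj
    omega
  have hinj : Set.InjOn f (Finset.range n) := by
    intro i hi j hj hij
    simp only [Finset.coe_range, Set.mem_Iio] at hi hj
    rcases Nat.lt_trichotomy i j with hlt | heq | hlt
    · exact absurd hij (haux i j hlt hj)
    · exact heq
    · exact absurd hij.symm (haux j i hlt hi)
  have hcard : ((Finset.range n).image f).card = n := by
    rw [Finset.card_image_of_injOn hinj, Finset.card_range]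
  refine ⟨hcard, ?_⟩
  -- exact subset-sum distinctness for superincreasing sequences
  have key : ∀ m, m ≤ n → ∀ S T : Finset ℕ, S ⊆ Finset.range m → T ⊆ Finset.range m →
      (∑ i ∈ S, f i) = (∑ i ∈ T, f i) → S = T := by
    intro m
    induction m with
    | zero =>
      intro _ S T hS hT _
      rw [Finset.range_zero, Finset.subset_empty] at hS hT
      rw [hS, hT]
    | succ m ih =>
      intro hmn S T hS hT hsum
      have hm : m < n := hmn
      have hSe : S.erase m ⊆ Finset.range m := by
        intro x hx
        have hx1 := Finset.mem_of_mem_erase hx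
        have hx2 := Finset.ne_of_mem_erase hx
        have := Finset.mem_range.mp (hS hx1)
        exact Finset.mem_range.mpr (by omega)
      have hTe : T.erase m ⊆ Finset.range m := by
        intro x hx
        have hx1 := Finset.mem_of_mem_erase hx
        have hx2 := Finset.ne_of_mem_erase hx
        have := Finset.mem_range.mp (hT hx1)
        exact Finset.mem_range.mpr (by omega)
      by_cases hmS : m ∈ S <;> by_cases hmT : m ∈ T
      · have hS' : (∑ i ∈ S, f i) = f m + ∑ i ∈ S.erase m, f i :=
          (Finset.add_sum_erase _ _ hmS).symm
        have hT' : (∑ i ∈ T, f i) = f m + ∑ i ∈ T.erase m, f i :=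
          (Finset.add_sum_erase _ _ hmT).symm
        have heq : S.erase m = T.erase m :=
          ih (by omega) _ _ hSe hTe (by omega)
        have : S = insert m (S.erase m) := (Finset.insert_erase hmS).symm
        rw [this, heq, Finset.insert_erase hmT]
      · exfalso
        have hT' : T ⊆ Finset.range m := by
          intro x hx
          have := Finset.mem_range.mp (hT hx)
          have : x ≠ m := fun h => hmT (h ▸ hx)
          exact Finset.mem_range.mpr (by omega)
        have h1 : (∑ i ∈ T, f i) ≤ ∑ i ∈ Finset.range m, f i :=
          Finset.sum_le_sum_of_subset hT'
        have h2 : f m ≤ ∑ i ∈ S, f i :=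
          Finset.single_le_sum (fun x _ => Nat.zero_le _) hmS
        have h3 := hsuper m hm
        omega
      · exfalso
        have hS' : S ⊆ Finset.range m := by
          intro x hx
          have := Finset.mem_range.mp (hS hx)
          have : x ≠ m := fun h => hmS (h ▸ hx)
          exact Finset.mem_range.mpr (by omega)
        have h1 : (∑ i ∈ S, f i) ≤ ∑ i ∈ Finset.range m, f i :=
          Finset.sum_le_sum_of_subset hS'
        have h2 : f m ≤ ∑ i ∈ T, f i :=
          Finset.single_le_sum (fun x _ => Nat.zero_le _) hmT
        have h3 := hsuper m hm
        omega
      · have hS' : S ⊆ Finset.range m := by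
          intro x hx
          have := Finset.mem_range.mp (hS hx)
          have : x ≠ m := fun h => hmS (h ▸ hx)
          exact Finset.mem_range.mpr (by omega)
        have hT' : T ⊆ Finset.range m := by
          intro x hx
          have := Finset.mem_range.mp (hT hx)
          have : x ≠ m := fun h => hmT (h ▸ hx)
          exact Finset.mem_range.mpr (by omega)
        exact ih (by omega) _ _ hS' hT' hsum
  -- the total sum is below the modulus
  have hptot : (∑ i ∈ Finset.range n, p i) ≤ 2 * r := by
    have h1 : (∑ i ∈ Finset.range n, p i)
        = (∑ i ∈ Finset.range (n - 1), p i) + p (n - 1) := by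
      conv_lhs => rw [show n = (n - 1) + 1 by omega]
      rw [Finset.sum_range_succ]
    have h2 : (∑ i ∈ Finset.range (n - 1), p i) ≤ p (n - 1) := by
      rcases Nat.eq_zero_or_pos (n - 1) with h0 | h1'
      · rw [h0]; simp
      · exact hpsum (n - 1) (by omega)
    omega
  have htot : (∑ i ∈ Finset.range n, f i) < 2 ^ n + t := by
    have h1 : (∑ i ∈ Finset.range n, f i)
        = (∑ i ∈ Finset.range n, (2:ℕ) ^ i) + ∑ i ∈ Finset.range n, p i := by
      rw [← Finset.sum_add_distrib]
    have h2 := hgeom n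
    omega
  -- conclude
  intro B hB C hC hmod
  obtain ⟨S, hSsub, hSeq⟩ := Finset.subset_image_iff.mp hB
  obtain ⟨T, hTsub, hTeq⟩ := Finset.subset_image_iff.mp hC
  have hSsum : (∑ x ∈ B, x) = ∑ i ∈ S, f i := by
    rw [← hSeq]
    exact Finset.sum_image (fun i hi j hj h =>
      hinj (by simpa using hSsub hi) (by simpa using hSsub hj) h)
  have hTsum : (∑ x ∈ C, x) = ∑ i ∈ T, f i := by
    rw [← hTeq]
    exact Finset.sum_image (fun i hi j hj h =>
      hinj (by simpa using hTsub hi) (by simpa using hTsub hj) h)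
  have hSlt : (∑ i ∈ S, f i) < 2 ^ n + t :=
    lt_of_le_of_lt (Finset.sum_le_sum_of_subset hSsub) htot
  have hTlt : (∑ i ∈ T, f i) < 2 ^ n + t :=
    lt_of_le_of_lt (Finset.sum_le_sum_of_subset hTsub) htot
  rw [hSsum, hTsum, Nat.mod_eq_of_lt hSlt, Nat.mod_eq_of_lt hTlt] at hmod
  have : S = T := key n le_rfl S T hSsub hTsub hmod
  rw [← hSeq, ← hTeq, this]
end

section
/- Let n ≥ 1, let 0 ≤ i ≤ n, and let a_0, a_1, …, a_{i-1} be positive integers with v_2(a_j) = j for every 0 ≤ j ≤ i-1, where v_2 denotes the 2-adic valuation. If N is a positive integer with N > 2^n - 2^i + (a_0 + a_1 + … + a_{i-1}), then the n-element set A = {a_0, a_1, …, a_{i-1}} ∪ {2^i, 2^{i+1}, …, 2^{n-1}} is sumset-distinct modulo N. -/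
/-!
Every element of `A` has a different 2-adic valuation. If two distinct subsets had the same
sum, take the element `x` of their symmetric difference of least valuation `v`: modulo
`2 ^ (v + 1)` the sum of the difference on the side of `x` is `x ≢ 0`, while the other side
is `0`. So all subset sums are distinct integers, and they lie in `[0, N)` because
`N` exceeds the sum of `A`, which is `2 ^ n - 2 ^ i + ∑ a_j`.
-/

open Finset

section padicValNat

variable {p : ℕ}

lemma pow_succ_dvd_sum_of_lt_padicValNat {D : Finset ℕ} {v : ℕ}
    (h : ∀ y ∈ D, v < padicValNat p y) : p ^ (v + 1) ∣ ∑ y ∈ D, y :=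
  dvd_sum fun y hy => (pow_dvd_pow p (h y hy)).trans pow_padicValNat_dvd

lemma sum_ne_sum_of_padicValNat_lt [Fact p.Prime] {D E : Finset ℕ} {x : ℕ} (hx : x ∈ D)
    (hx0 : x ≠ 0) (hxE : x ∉ E)
    (hmin : ∀ y ∈ D ∪ E, y ≠ x → padicValNat p x < padicValNat p y) :
    ∑ y ∈ D, y ≠ ∑ y ∈ E, y := by
  intro h
  have hD : p ^ (padicValNat p x + 1) ∣ ∑ y ∈ D.erase x, y :=
    pow_succ_dvd_sum_of_lt_padicValNat fun y hy =>
      hmin y (mem_union_left _ (mem_of_mem_erase hy)) (ne_of_mem_erase hy)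
  have hE : p ^ (padicValNat p x + 1) ∣ ∑ y ∈ E, y :=
    pow_succ_dvd_sum_of_lt_padicValNat fun y hy =>
      hmin y (mem_union_right _ hy) (ne_of_mem_of_not_mem hy hxE)
  rw [← h, ← add_sum_erase D (fun y => y) hx] at hE
  exact pow_succ_padicValNat_not_dvd hx0 ((Nat.dvd_add_left hD).mp hE)

theorem eq_of_sum_eq_of_injOn_padicValNat [Fact p.Prime] {S B C : Finset ℕ} (h0 : 0 ∉ S)
    (hv : Set.InjOn (padicValNat p) S) (hB : B ⊆ S) (hC : C ⊆ S)
    (h : ∑ x ∈ B, x = ∑ x ∈ C, x) : B = C := by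
  by_contra hne
  have hne' : (B \ C ∪ C \ B).Nonempty := by
    rw [nonempty_iff_ne_empty, Ne, union_eq_empty, sdiff_eq_empty_iff_subset,
      sdiff_eq_empty_iff_subset]
    exact fun ⟨hBC, hCB⟩ => hne (hBC.antisymm hCB)
  obtain ⟨x, hx, hxmin⟩ := exists_min_image _ (padicValNat p) hne'
  have hS : B \ C ∪ C \ B ⊆ S :=
    union_subset (sdiff_subset.trans hB) (sdiff_subset.trans hC)
  have hmin : ∀ y ∈ B \ C ∪ C \ B, y ≠ x → padicValNat p x < padicValNat p y :=
    fun y hy hyx => (hxmin y hy).lt_of_ne fun hxy => hyx (hv (hS hy) (hS hx) hxy.symm)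
  have hx0 : x ≠ 0 := fun hx0 => h0 (hx0 ▸ hS hx)
  have hsdiff := sum_sdiff_eq_sum_sdiff_iff.mpr h
  rcases mem_union.mp hx with hxB | hxC
  · exact sum_ne_sum_of_padicValNat_lt hxB hx0
      (fun hxC => (mem_sdiff.mp hxC).2 (mem_sdiff.mp hxB).1) hmin hsdiff
  · exact sum_ne_sum_of_padicValNat_lt hxC hx0
      (fun hxB => (mem_sdiff.mp hxB).2 (mem_sdiff.mp hxC).1)
      (union_comm (B \ C) _ ▸ hmin) hsdiff.symm

theorem sumsetDistinctMod_of_injOn_padicValNat [Fact p.Prime] {S : Finset ℕ} {N : ℕ}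
    (h0 : 0 ∉ S) (hv : Set.InjOn (padicValNat p) S) (hN : ∑ x ∈ S, x < N) :
    SumsetDistinctMod N S := by
  intro B hB C hC h
  have hlt : ∀ D ⊆ S, ∑ x ∈ D, x < N := fun D hD => (sum_le_sum_of_subset hD).trans_lt hN
  rw [Nat.mod_eq_of_lt (hlt B hB), Nat.mod_eq_of_lt (hlt C hC)] at h
  exact eq_of_sum_eq_of_injOn_padicValNat h0 hv hB hC h

variable {s : Finset ℕ} {b : ℕ → ℕ}

lemma injOn_of_padicValNat_eq (hb : ∀ j ∈ s, padicValNat p (b j) = j) : Set.InjOn b s :=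
  fun j hj k hk hjk => by rw [← hb j hj, ← hb k hk, hjk]

lemma injOn_padicValNat_image (hb : ∀ j ∈ s, padicValNat p (b j) = j) :
    Set.InjOn (padicValNat p) (s.image b) := by
  rw [coe_image]
  rintro - ⟨j, hj, rfl⟩ - ⟨k, hk, rfl⟩ hxy
  rw [hb j hj, hb k hk] at hxy
  rw [hxy]

theorem card_image_eq_and_sumsetDistinctMod [Fact p.Prime] {N : ℕ}
    (hb : ∀ j ∈ s, 0 < b j ∧ padicValNat p (b j) = j) (hN : ∑ j ∈ s, b j < N) :
    (s.image b).card = s.card ∧ SumsetDistinctMod N (s.image b) := by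
  have hval : ∀ j ∈ s, padicValNat p (b j) = j := fun j hj => (hb j hj).2
  have hinj := injOn_of_padicValNat_eq hval
  refine ⟨card_image_of_injOn hinj, sumsetDistinctMod_of_injOn_padicValNat ?_
    (injOn_padicValNat_image hval) (by rwa [sum_image hinj])⟩
  rw [mem_image]
  rintro ⟨j, hj, hbj⟩
  exact (hb j hj).1.ne' hbj

end padicValNat

lemma sum_Ico_two_pow {i n : ℕ} (h : i ≤ n) : ∑ j ∈ Ico i n, 2 ^ j = 2 ^ n - 2 ^ i := by
  induction n, h using Nat.le_induction with
  | base => simp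
  | succ n hn ih =>
    rw [sum_Ico_succ_top hn, ih, pow_succ]
    have := Nat.pow_le_pow_right two_pos hn
    omega

theorem stmt19_general (n : ℕ) (i : ℕ) (hi : i ≤ n) (a : ℕ → ℕ)
    (ha : ∀ j < i, 0 < a j ∧ padicValNat 2 (a j) = j)
    (N : ℕ) (hN : 2 ^ n - 2 ^ i + ∑ j ∈ Finset.range i, a j < N) :
    (((Finset.range i).image a) ∪ ((Finset.Ico i n).image (fun j => 2 ^ j))).card = n ∧
      SumsetDistinctMod N
        (((Finset.range i).image a) ∪ ((Finset.Ico i n).image (fun j => 2 ^ j))) := by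
  set b : ℕ → ℕ := fun j => if j < i then a j else 2 ^ j
  have hA : (range i).image a ∪ (Ico i n).image (fun j => 2 ^ j) = (range n).image b := by
    have hrange : range n = range i ∪ Ico i n := by
      rw [range_eq_Ico, range_eq_Ico, Ico_union_Ico_eq_Ico (Nat.zero_le i) hi]
    rw [hrange, image_union]
    congr 1 <;> refine image_congr fun j hj => ?_
    · simp [b, mem_range.mp hj]
    · simp [b, (mem_Ico.mp hj).1]
  have hb : ∀ j ∈ range n, 0 < b j ∧ padicValNat 2 (b j) = j := by
    intro j _
    by_cases hj : j < i
    · simpa [b, hj] using ha j hj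
    · simp [b, hj]
  have hsum : ∑ j ∈ range n, b j = 2 ^ n - 2 ^ i + ∑ j ∈ range i, a j := by
    rw [← sum_range_add_sum_Ico _ hi, ← sum_Ico_two_pow hi, add_comm]
    congr 1 <;> refine sum_congr rfl fun j hj => ?_
    · simp [b, (mem_Ico.mp hj).1]
    · simp [b, mem_range.mp hj]
  obtain ⟨hcard, hdistinct⟩ := card_image_eq_and_sumsetDistinctMod hb (hsum ▸ hN)
  rw [hA]
  exact ⟨hcard.trans (card_range n), hdistinct⟩

theorem stmt19 (n : ℕ) (hn : 1 ≤ n) (i : ℕ) (hi : i ≤ n) (a : ℕ → ℕ)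
    (ha : ∀ j < i, 0 < a j ∧ padicValNat 2 (a j) = j)
    (N : ℕ) (hN : 2 ^ n - 2 ^ i + ∑ j ∈ Finset.range i, a j < N) :
    (((Finset.range i).image a) ∪ ((Finset.Ico i n).image (fun j => 2 ^ j))).card = n ∧
      SumsetDistinctMod N
        (((Finset.range i).image a) ∪ ((Finset.Ico i n).image (fun j => 2 ^ j))) :=
  stmt19_general n i hi a ha N hN
end
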